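/- arXiv:2402.00408 — 11 statements merged into one kernel-verified Lean document; each statement's English description precedes it below -/
import Mathlib

section
/- Let α < β, let x : ℝ → ℝ be differentiable on (α,β) with ẋ(t) = deriv x t nonzero on (α,β), let w, v : ℝ → ℝ be differentiable on (α,β), let p, q, r : ℝ → ℝ and λ ∈ ℝ. Suppose u : ℝ → ℝ satisfies u(x(t)) = w(t)·v(t) for all t ∈ (α,β), u is differentiable with y ↦ p(y)·u'(y) differentiable on x((α,β)), the functions t ↦ (p(x(t))/ẋ(t))·w'(t) and t ↦ (p(x(t))·w(t)²/ẋ(t))·v'(t) are differentiable on (α,β), and −(d/dy)(p(y)·u'(y)) + q(y)·u(y) = λ·r(y)·u(y) for all y ∈ x((α,β)). Then for every t ∈ (α,β): −deriv (s ↦ P(s)·v'(s)) t + Q(t)·v(t) = λ·R(t)·v(t), where P(t) = p(x(t))·w(t)²/ẋ(t), Q(t) = [q(x(t))·w(t) − (1/ẋ(t))·deriv (s ↦ (p(x(s))/ẋ(s))·w'(s)) t]·w(t)·ẋ(t), and R(t) = r(x(t))·w(t)²·ẋ(t). -/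
/-!
Write `C = (p·u')∘x` for the flux of `u` along the curve. Differentiating `u ∘ x = w·v` gives
`(u'∘x)·ẋ = (w·v)'`, which rearranges to `P·v' = w·C − A·(w·v)` with `A = (p∘x/ẋ)·w'`.
Differentiating this identity, the term `w'·C` cancels against `A·(w·v)'`, leaving
`(P·v')' = w·C' − A'·w·v`, and the chain rule together with the original equation turns
`C' = ((p·u')'∘x)·ẋ` into `(q − λ·r)∘x · w·v·ẋ`.
-/

open Set Filter Topology

lemma deriv_mul_deriv_eq_of_comp_eventuallyEq {u x g : ℝ → ℝ} {s : ℝ}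
    (hu : DifferentiableAt ℝ u (x s)) (hx : DifferentiableAt ℝ x s)
    (h : (fun τ => u (x τ)) =ᶠ[𝓝 s] g) :
    deriv u (x s) * deriv x s = deriv g s :=
  (deriv_comp s hu hx).symm.trans h.deriv_eq

section ChangeOfVariables

variable {U : Set ℝ} {x w v u p : ℝ → ℝ}

lemma deriv_comp_mul_deriv_eq_deriv_mul (hU : IsOpen U)
    (hw : ∀ s ∈ U, DifferentiableAt ℝ w s) (hv : ∀ s ∈ U, DifferentiableAt ℝ v s)
    (huv : ∀ s ∈ U, u (x s) = w s * v s) {s : ℝ} (hs : s ∈ U)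
    (hu : DifferentiableAt ℝ u (x s)) (hx : deriv x s ≠ 0) :
    deriv u (x s) * deriv x s = deriv w s * v s + w s * deriv v s := by
  rw [deriv_mul_deriv_eq_of_comp_eventuallyEq hu (differentiableAt_of_deriv_ne_zero hx)
    (eventually_of_mem (hU.mem_nhds hs) huv), deriv_fun_mul (hw s hs) (hv s hs)]

lemma transformed_flux_eventuallyEq (hU : IsOpen U)
    (hx : ∀ s ∈ U, deriv x s ≠ 0)
    (hw : ∀ s ∈ U, DifferentiableAt ℝ w s) (hv : ∀ s ∈ U, DifferentiableAt ℝ v s)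
    (huv : ∀ s ∈ U, u (x s) = w s * v s) (hu : ∀ s ∈ U, DifferentiableAt ℝ u (x s))
    {t : ℝ} (ht : t ∈ U) :
    (fun s => p (x s) * w s ^ 2 / deriv x s * deriv v s) =ᶠ[𝓝 t]
      fun s => w s * (p (x s) * deriv u (x s))
        - p (x s) / deriv x s * deriv w s * (w s * v s) := by
  filter_upwards [hU.mem_nhds ht] with s hs
  have hdu := deriv_comp_mul_deriv_eq_deriv_mul hU hw hv huv hs (hu s hs) (hx s hs)
  have hxs := hx s hs
  field_simp
  linear_combination -p (x s) * w s * hdu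

end ChangeOfVariables

theorem stmt3_general (α β : ℝ) (x w v : ℝ → ℝ)
    (hx' : ∀ t ∈ Set.Ioo α β, deriv x t ≠ 0)
    (hw : ∀ t ∈ Set.Ioo α β, DifferentiableAt ℝ w t)
    (hv : ∀ t ∈ Set.Ioo α β, DifferentiableAt ℝ v t)
    (p q r : ℝ → ℝ) (lam : ℝ) (u : ℝ → ℝ)
    (huv : ∀ t ∈ Set.Ioo α β, u (x t) = w t * v t)
    (hu : ∀ y ∈ x '' Set.Ioo α β, DifferentiableAt ℝ u y)
    (hpu : ∀ y ∈ x '' Set.Ioo α β,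
      DifferentiableAt ℝ (fun z => p z * deriv u z) y)
    (h1 : ∀ t ∈ Set.Ioo α β,
      DifferentiableAt ℝ (fun s => (p (x s) / deriv x s) * deriv w s) t)
    (heq : ∀ y ∈ x '' Set.Ioo α β,
      -deriv (fun z => p z * deriv u z) y + q y * u y = lam * r y * u y) :
    ∀ t ∈ Set.Ioo α β,
      -deriv (fun s => (p (x s) * w s ^ 2 / deriv x s) * deriv v s) t
          + ((q (x t) * w t
              - (1 / deriv x t)
                  * deriv (fun s => (p (x s) / deriv x s) * deriv w s) t)
              * w t * deriv x t) * v t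
        = lam * (r (x t) * w t ^ 2 * deriv x t) * v t := by
  intro t ht
  have hxt := hx' t ht
  have hu' : ∀ s ∈ Ioo α β, DifferentiableAt ℝ u (x s) := fun s hs => hu _ ⟨s, hs, rfl⟩
  have hflux : HasDerivAt (fun s => p (x s) * deriv u (x s))
      (deriv (fun z => p z * deriv u z) (x t) * deriv x t) t :=
    (hpu _ ⟨t, ht, rfl⟩).hasDerivAt.comp t (differentiableAt_of_deriv_ne_zero hxt).hasDerivAt
  have hdu := deriv_comp_mul_deriv_eq_deriv_mul isOpen_Ioo hw hv huv ht (hu' t ht) hxt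
  have hSL := heq _ ⟨t, ht, rfl⟩
  rw [huv t ht] at hSL
  rw [(transformed_flux_eventuallyEq isOpen_Ioo hx' hw hv huv hu' ht).deriv_eq,
    deriv_fun_sub ((hw t ht).fun_mul hflux.differentiableAt)
      ((h1 t ht).fun_mul ((hw t ht).fun_mul (hv t ht))),
    deriv_fun_mul (hw t ht) hflux.differentiableAt, hflux.deriv,
    deriv_fun_mul (h1 t ht) ((hw t ht).fun_mul (hv t ht)),
    deriv_fun_mul (hw t ht) (hv t ht)]
  field_simp
  linear_combination w t * deriv x t ^ 2 * hSL - p (x t) * deriv w t * hdu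

/-- transforming both the independent variable `x = x(t)` and the
dependent variable `u = w·v` simultaneously gives the Sturm–Liouville form
`−(P·v')' + Q·v = λ·R·v` with
`P = p·w²/ẋ`, `Q = (q·w − (1/ẋ)·((p/ẋ)·w')')·w·ẋ`, `R = r·w²·ẋ`. -/
theorem stmt3 (α β : ℝ) (hαβ : α < β) (x w v : ℝ → ℝ)
    (hx : ∀ t ∈ Set.Ioo α β, DifferentiableAt ℝ x t)
    (hx' : ∀ t ∈ Set.Ioo α β, deriv x t ≠ 0)
    (hw : ∀ t ∈ Set.Ioo α β, DifferentiableAt ℝ w t)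
    (hv : ∀ t ∈ Set.Ioo α β, DifferentiableAt ℝ v t)
    (p q r : ℝ → ℝ) (lam : ℝ) (u : ℝ → ℝ)
    (huv : ∀ t ∈ Set.Ioo α β, u (x t) = w t * v t)
    (hu : ∀ y ∈ x '' Set.Ioo α β, DifferentiableAt ℝ u y)
    (hpu : ∀ y ∈ x '' Set.Ioo α β,
      DifferentiableAt ℝ (fun z => p z * deriv u z) y)
    (h1 : ∀ t ∈ Set.Ioo α β,
      DifferentiableAt ℝ (fun s => (p (x s) / deriv x s) * deriv w s) t)
    (h2 : ∀ t ∈ Set.Ioo α β,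
      DifferentiableAt ℝ (fun s => (p (x s) * w s ^ 2 / deriv x s) * deriv v s) t)
    (heq : ∀ y ∈ x '' Set.Ioo α β,
      -deriv (fun z => p z * deriv u z) y + q y * u y = lam * r y * u y) :
    ∀ t ∈ Set.Ioo α β,
      -deriv (fun s => (p (x s) * w s ^ 2 / deriv x s) * deriv v s) t
          + ((q (x t) * w t
              - (1 / deriv x t)
                  * deriv (fun s => (p (x s) / deriv x s) * deriv w s) t)
              * w t * deriv x t) * v t
        = lam * (r (x t) * w t ^ 2 * deriv x t) * v t :=
  stmt3_general α β x w v hx' hw hv p q r lam u huv hu hpu h1 heq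
end

section
/- Let α < β, let p, q, r : ℝ → ℝ with p and r strictly positive and sufficiently smooth on an interval (a,b), and let λ ∈ ℝ. Let x : ℝ → ℝ map (α,β) into (a,b), be differentiable with ẋ(t) = √(p(x(t))/r(x(t))) for all t ∈ (α,β), and set w(t) = (p(x(t))·r(x(t)))^(−1/4), assumed twice differentiable on (α,β). Suppose u is differentiable with y ↦ p(y)·u'(y) differentiable on (a,b) and −(d/dy)(p(y)·u'(y)) + q(y)·u(y) = λ·r(y)·u(y) for all y ∈ (a,b). Define v(t) = u(x(t))/w(t). Then v is twice differentiable on (α,β) and −v''(t) + I(t)·v(t) = λ·v(t) for all t ∈ (α,β), where I(t) = q(x(t))/r(x(t)) + w(t)·(d²/dt²)(1/w)(t). -/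
/-!
Put `U = u ∘ x` and `G = 1/w = (p·r)^(1/4) ∘ x`. Since `ẋ = √(p/r)` and `G² = √(p/r)·r`, the flux
`p·u'` read along `x` is `G²·U'`, so the Sturm–Liouville equation becomes
`(G²·U')' = (q/r − λ)·G²·U` in the variable `t`. For `v = U·G` one has `(G²·U')' = G·(v'' − U·G'')`,
which removes the first-order term and leaves `−v'' + (q/r + G''/G)·v = λ·v`.
-/

open Filter Set

section SecondDerivative

variable {𝕜 : Type*} [NontriviallyNormedField 𝕜] {s : Set 𝕜} {t : 𝕜}

theorem differentiableAt_deriv_fun_inv {w : 𝕜 → 𝕜} (hs : IsOpen s)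
    (hw : ∀ τ ∈ s, DifferentiableAt 𝕜 w τ) (hw' : DifferentiableAt 𝕜 (deriv w) t)
    (hw0 : ∀ τ ∈ s, w τ ≠ 0) (ht : t ∈ s) :
    DifferentiableAt 𝕜 (deriv fun τ => (w τ)⁻¹) t := by
  have hderiv : deriv (fun τ => (w τ)⁻¹) =ᶠ[nhds t] fun τ => -deriv w τ / w τ ^ 2 :=
    eventually_of_mem (hs.mem_nhds ht) fun τ hτ => deriv_fun_inv'' (hw τ hτ) (hw0 τ hτ)
  exact (hw'.neg.div ((hw t ht).pow 2) (pow_ne_zero 2 (hw0 t ht))).congr_of_eventuallyEq hderiv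

theorem hasDerivAt_deriv_mul_of_hasDerivAt_sq_mul_deriv {G U : 𝕜 → 𝕜} {G'' F' : 𝕜}
    (hs : IsOpen s) (hG : ∀ τ ∈ s, DifferentiableAt 𝕜 G τ) (hG0 : ∀ τ ∈ s, G τ ≠ 0)
    (hU : ∀ τ ∈ s, DifferentiableAt 𝕜 U τ) (ht : t ∈ s) (hG' : HasDerivAt (deriv G) G'' t)
    (hF : HasDerivAt (fun τ => G τ ^ 2 * deriv U τ) F' t) :
    HasDerivAt (deriv fun τ => U τ * G τ) (U t * G'' + F' / G t) t := by
  have hnhds := hs.mem_nhds ht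
  have hU'eq : deriv U =ᶠ[nhds t] fun τ => G τ ^ 2 * deriv U τ / G τ ^ 2 :=
    eventually_of_mem hnhds fun τ hτ => by field_simp [hG0 τ hτ]
  have hU' : HasDerivAt (deriv U) (deriv (deriv U) t) t :=
    ((hF.differentiableAt.div ((hG t ht).pow 2) (pow_ne_zero 2 (hG0 t ht))).congr_of_eventuallyEq
      hU'eq).hasDerivAt
  have hF' : F' = 2 * G t * deriv G t * deriv U t + G t ^ 2 * deriv (deriv U) t := by
    rw [hF.unique (((hG t ht).hasDerivAt.fun_pow 2).mul hU')]
    push_cast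
    ring
  have hvderiv : (deriv fun τ => U τ * G τ) =ᶠ[nhds t]
      fun τ => deriv U τ * G τ + U τ * deriv G τ :=
    eventually_of_mem hnhds fun τ hτ => deriv_fun_mul (hU τ hτ) (hG τ hτ)
  refine ((hU'.mul (hG t ht).hasDerivAt).add ((hU t ht).hasDerivAt.mul hG')).congr_of_eventuallyEq
    hvderiv |>.congr_deriv ?_
  rw [hF']
  field_simp [hG0 t ht]
  ring

end SecondDerivative

theorem sq_inv_mul_rpow_neg_quarter {P R : ℝ} (hP : 0 ≤ P) (hR : 0 < R) :
    ((P * R) ^ (-(1 : ℝ) / 4))⁻¹ ^ 2 = √(P / R) * R := by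
  have hPR : 0 ≤ P * R := mul_nonneg hP hR.le
  calc ((P * R) ^ (-(1 : ℝ) / 4))⁻¹ ^ 2 = (P * R) ^ ((1 : ℝ) / 2) := by
        rw [← Real.rpow_neg hPR, ← Real.rpow_mul_natCast hPR]
        norm_num
    _ = √(P / R * R ^ 2) := by rw [← Real.sqrt_eq_rpow]; congr 1; field_simp
    _ = √(P / R) * R := by rw [Real.sqrt_mul (div_nonneg hP hR.le), Real.sqrt_sq hR.le]

theorem sq_inv_mul_rpow_neg_quarter_mul_sqrt_div {P R : ℝ} (hP : 0 ≤ P) (hR : 0 < R) (c : ℝ) :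
    ((P * R) ^ (-(1 : ℝ) / 4))⁻¹ ^ 2 * (c * √(P / R)) = P * c := by
  rw [sq_inv_mul_rpow_neg_quarter hP hR]
  calc √(P / R) * R * (c * √(P / R)) = √(P / R) ^ 2 * R * c := by ring
    _ = P * c := by rw [Real.sq_sqrt (div_nonneg hP hR.le)]; field_simp

theorem stmt4_general (α β a b lam : ℝ)
    (p q r : ℝ → ℝ)
    (hp : ∀ y ∈ Set.Ioo a b, 0 < p y) (hr : ∀ y ∈ Set.Ioo a b, 0 < r y)
    (x : ℝ → ℝ) (hmaps : ∀ t ∈ Set.Ioo α β, x t ∈ Set.Ioo a b)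
    (hx : ∀ t ∈ Set.Ioo α β, HasDerivAt x (Real.sqrt (p (x t) / r (x t))) t)
    (w : ℝ → ℝ) (hwdef : ∀ t, w t = (p (x t) * r (x t)) ^ (-(1 : ℝ) / 4))
    (hw : ∀ t ∈ Set.Ioo α β, DifferentiableAt ℝ w t)
    (hw' : ∀ t ∈ Set.Ioo α β, DifferentiableAt ℝ (deriv w) t)
    (u : ℝ → ℝ)
    (hu : ∀ y ∈ Set.Ioo a b, DifferentiableAt ℝ u y)
    (hpu : ∀ y ∈ Set.Ioo a b, DifferentiableAt ℝ (fun z => p z * deriv u z) y)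
    (heq : ∀ y ∈ Set.Ioo a b,
      -deriv (fun z => p z * deriv u z) y + q y * u y = lam * r y * u y)
    (v : ℝ → ℝ) (hvdef : ∀ t, v t = u (x t) / w t) :
    ∀ t ∈ Set.Ioo α β,
      DifferentiableAt ℝ v t ∧ DifferentiableAt ℝ (deriv v) t ∧
      -deriv (deriv v) t
          + (q (x t) / r (x t) + w t * deriv (deriv (fun s => 1 / w s)) t) * v t
        = lam * v t := by
  set G : ℝ → ℝ := fun s => (w s)⁻¹
  set U : ℝ → ℝ := fun s => u (x s)
  have hv : v = fun s => U s * G s := funext fun s => by rw [hvdef, div_eq_mul_inv]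
  have hw0 : ∀ t ∈ Ioo α β, w t ≠ 0 := fun t ht => by
    rw [hwdef]
    exact (Real.rpow_pos_of_pos (mul_pos (hp _ (hmaps t ht)) (hr _ (hmaps t ht))) _).ne'
  have hG0 : ∀ t ∈ Ioo α β, G t ≠ 0 := fun t ht => inv_ne_zero (hw0 t ht)
  have hG2 : ∀ t ∈ Ioo α β, G t ^ 2 = √(p (x t) / r (x t)) * r (x t) := fun t ht => by
    simp only [G, hwdef]
    exact sq_inv_mul_rpow_neg_quarter (hp _ (hmaps t ht)).le (hr _ (hmaps t ht))
  have hU : ∀ t ∈ Ioo α β, HasDerivAt U (deriv u (x t) * √(p (x t) / r (x t))) t :=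
    fun t ht => (hu _ (hmaps t ht)).hasDerivAt.comp t (hx t ht)
  have hflux : ∀ t ∈ Ioo α β, G t ^ 2 * deriv U t = p (x t) * deriv u (x t) := fun t ht => by
    simp only [(hU t ht).deriv, G, hwdef]
    exact sq_inv_mul_rpow_neg_quarter_mul_sqrt_div (hp _ (hmaps t ht)).le (hr _ (hmaps t ht)) _
  have hflux' : ∀ t ∈ Ioo α β, HasDerivAt (fun s => G s ^ 2 * deriv U s)
      (deriv (fun z => p z * deriv u z) (x t) * √(p (x t) / r (x t))) t := fun t ht =>
    ((hpu _ (hmaps t ht)).hasDerivAt.comp t (hx t ht)).congr_of_eventuallyEq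
      (eventually_of_mem (isOpen_Ioo.mem_nhds ht) hflux)
  intro t ht
  have hv'' := hasDerivAt_deriv_mul_of_hasDerivAt_sq_mul_deriv (G := G) isOpen_Ioo
    (fun τ hτ => (hw τ hτ).inv (hw0 τ hτ)) hG0 (fun τ hτ => (hU τ hτ).differentiableAt) ht
    (differentiableAt_deriv_fun_inv isOpen_Ioo hw (hw' t ht) hw0 ht).hasDerivAt (hflux' t ht)
  simp only [one_div, hv]
  refine ⟨(hU t ht).differentiableAt.mul ((hw t ht).inv (hw0 t ht)), hv''.differentiableAt, ?_⟩
  rw [hv''.deriv]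
  have hwG : w t * G t = 1 := mul_inv_cancel₀ (hw0 t ht)
  have hSL : -deriv (fun z => p z * deriv u z) (x t) + q (x t) * U t = lam * r (x t) * U t :=
    heq _ (hmaps t ht)
  -- what remains is `√(p/r) / G = G / r`, i.e. `hG2`
  field_simp [hG0 t ht, (hr _ (hmaps t ht)).ne']
  linear_combination r (x t) * √(p (x t) / r (x t)) * hSL
    + U t * deriv (deriv fun τ => 1 / w τ) t * r (x t) * G t * hwG
    + (U t * q (x t) - U t * r (x t) * lam) * hG2 t ht

/-- Liouville's transformation. With `dx/dt = √(p/r)`,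
`w = (p·r)^(−1/4)` and `v = u∘x / w`, a solution `u` of the canonical
Sturm–Liouville equation gives a solution `v` of the Schrödinger form
`−v'' + I·v = λ·v` where `I(t) = q/r + w·(1/w)''`. -/
theorem stmt4 (α β a b lam : ℝ) (hαβ : α < β) (hab : a < b)
    (p q r : ℝ → ℝ)
    (hp : ∀ y ∈ Set.Ioo a b, 0 < p y) (hr : ∀ y ∈ Set.Ioo a b, 0 < r y)
    (hps : ContDiffOn ℝ 2 p (Set.Ioo a b)) (hrs : ContDiffOn ℝ 2 r (Set.Ioo a b))
    (x : ℝ → ℝ) (hmaps : ∀ t ∈ Set.Ioo α β, x t ∈ Set.Ioo a b)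
    (hx : ∀ t ∈ Set.Ioo α β, HasDerivAt x (Real.sqrt (p (x t) / r (x t))) t)
    (w : ℝ → ℝ) (hwdef : ∀ t, w t = (p (x t) * r (x t)) ^ (-(1 : ℝ) / 4))
    (hw : ∀ t ∈ Set.Ioo α β, DifferentiableAt ℝ w t)
    (hw' : ∀ t ∈ Set.Ioo α β, DifferentiableAt ℝ (deriv w) t)
    (u : ℝ → ℝ)
    (hu : ∀ y ∈ Set.Ioo a b, DifferentiableAt ℝ u y)
    (hpu : ∀ y ∈ Set.Ioo a b, DifferentiableAt ℝ (fun z => p z * deriv u z) y)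
    (heq : ∀ y ∈ Set.Ioo a b,
      -deriv (fun z => p z * deriv u z) y + q y * u y = lam * r y * u y)
    (v : ℝ → ℝ) (hvdef : ∀ t, v t = u (x t) / w t) :
    ∀ t ∈ Set.Ioo α β,
      DifferentiableAt ℝ v t ∧ DifferentiableAt ℝ (deriv v) t ∧
      -deriv (deriv v) t
          + (q (x t) / r (x t) + w t * deriv (deriv (fun s => 1 / w s)) t) * v t
        = lam * v t :=
  stmt4_general α β a b lam p q r hp hr x hmaps hx w hwdef hw hw' u hu hpu heq v hvdef
end

section
/- In the setting of Liouville's transformation, let p : ℝ → ℝ, let x : ℝ → ℝ be differentiable at α with ẋ(α) ≠ 0 and x(α) = a, let w be differentiable at α with w(α) ≠ 0, let u and v be differentiable at a and α respectively with u(x(t)) = w(t)·v(t) near α. If δ₀·u(a) − δ₁·p(a)·u'(a) = 0 for real constants δ₀, δ₁, then δ₂·v(α) − δ₁·P(α)·v'(α) = 0, where δ₂ = δ₀·w(α)² − δ₁·p(a)·w(α)·(w'(α)/ẋ(α)) and P(α) = p(a)·w(α)²/ẋ(α). -/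
/-!
Differentiating `u ∘ x = w * v` at `α` gives `u'(a) ẋ(α) = w'(α) v(α) + w(α) v'(α)`, and
`u(a) = w(α) v(α)`. Multiplying the boundary condition at `a` by `w(α)` and substituting both
identities gives the transformed condition.
-/

lemma deriv_mul_deriv_eq_of_comp_eventuallyEq_mul {x w u v : ℝ → ℝ} {α : ℝ}
    (hx : DifferentiableAt ℝ x α) (hw : DifferentiableAt ℝ w α)
    (hu : DifferentiableAt ℝ u (x α)) (hv : DifferentiableAt ℝ v α)
    (huv : ∀ᶠ t in nhds α, u (x t) = w t * v t) :
    deriv u (x α) * deriv x α = deriv w α * v α + w α * deriv v α := by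
  calc deriv u (x α) * deriv x α = deriv (u ∘ x) α := (deriv_comp α hu hx).symm
    _ = deriv (fun t => w t * v t) α := Filter.EventuallyEq.deriv_eq huv
    _ = deriv w α * v α + w α * deriv v α := deriv_mul hw hv

lemma liouville_boundary_condition_of_values {δ₀ δ₁ p U U' W W' V V' X' : ℝ} (hX' : X' ≠ 0)
    (hU : U = W * V) (hU' : U' * X' = W' * V + W * V') (hbc : δ₀ * U - δ₁ * p * U' = 0) :
    (δ₀ * W ^ 2 - δ₁ * p * W * (W' / X')) * V - δ₁ * (p * W ^ 2 / X') * V' = 0 := by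
  field_simp
  linear_combination (W * X') * hbc + (δ₁ * p * W) * hU' - (δ₀ * W * X') * hU

theorem stmt5_general (p x w u v : ℝ → ℝ) (α a δ₀ δ₁ : ℝ)
    (hx' : deriv x α ≠ 0) (hxa : x α = a)
    (hw : DifferentiableAt ℝ w α)
    (hu : DifferentiableAt ℝ u a) (hv : DifferentiableAt ℝ v α)
    (huv : ∀ᶠ t in nhds α, u (x t) = w t * v t)
    (hbc : δ₀ * u a - δ₁ * p a * deriv u a = 0) :
    (δ₀ * w α ^ 2 - δ₁ * p a * w α * (deriv w α / deriv x α)) * v α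
      - δ₁ * (p a * w α ^ 2 / deriv x α) * deriv v α = 0 := by
  subst hxa
  have hx : DifferentiableAt ℝ x α := differentiableAt_of_deriv_ne_zero hx'
  exact liouville_boundary_condition_of_values hx' huv.self_of_nhds
    (deriv_mul_deriv_eq_of_comp_eventuallyEq_mul hx hw hu hv huv) hbc

/-- under Liouville's transformation the regular boundary condition
`δ₀·u(a) − δ₁·p(a)·u'(a) = 0` becomes `δ₂·v(α) − δ₁·P(α)·v'(α) = 0` with
`δ₂ = δ₀·w(α)² − δ₁·p(a)·w(α)·(w'(α)/ẋ(α))` and `P(α) = p(a)·w(α)²/ẋ(α)`. -/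
theorem stmt5 (p x w u v : ℝ → ℝ) (α a δ₀ δ₁ : ℝ)
    (hx : DifferentiableAt ℝ x α) (hx' : deriv x α ≠ 0) (hxa : x α = a)
    (hw : DifferentiableAt ℝ w α) (hw0 : w α ≠ 0)
    (hu : DifferentiableAt ℝ u a) (hv : DifferentiableAt ℝ v α)
    (huv : ∀ᶠ t in nhds α, u (x t) = w t * v t)
    (hbc : δ₀ * u a - δ₁ * p a * deriv u a = 0) :
    (δ₀ * w α ^ 2 - δ₁ * p a * w α * (deriv w α / deriv x α)) * v α
      - δ₁ * (p a * w α ^ 2 / deriv x α) * deriv v α = 0 :=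
  stmt5_general p x w u v α a δ₀ δ₁ hx' hxa hw hu hv huv hbc
end

section
/- Let α < β, let p, q, r : ℝ → ℝ with p and r strictly positive and sufficiently smooth, let λ ∈ ℝ. Let x : ℝ → ℝ be differentiable on (α,β) with ẋ(t) = √(p(x(t))/r(x(t))) > 0 (so x is strictly increasing onto an interval (a,b)), set w(t) = (p(x(t))·r(x(t)))^(−1/4), assumed twice differentiable, and set I(t) = q(x(t))/r(x(t)) + w(t)·(d²/dt²)(1/w)(t). Suppose v is twice differentiable on (α,β) and satisfies −v''(t) + I(t)·v(t) = λ·v(t) for all t ∈ (α,β). Define u : (a,b) → ℝ by u(x(t)) = w(t)·v(t), and assume u is differentiable with y ↦ p(y)·u'(y) differentiable on (a,b). Then −(d/dy)(p(y)·u'(y)) + q(y)·u(y) = λ·r(y)·u(y) for all y ∈ (a,b). -/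
/-!
Write `g = 1/w = (p r)^(1/4)` and `S = √(p/r) = ẋ`, so that `g² = p / S = r S`.
Since `u ∘ x = v / g`, the chain rule gives `p(x) u'(x) = g v' - g' v`, the Wronskian of `g` and `v`,
whose derivative is `g v'' - g'' v`. The Schrödinger equation for `v` reads
`v'' = (q/r + g''/g - λ) v`, so the `g''` terms cancel and `(p u')'(x) · S = g (q/r - λ) v`;
dividing by `S = g² / r` turns this into `(q - λ r) w v = (q - λ r) u(x)`.
-/

open Filter Topology

noncomputable def wronskian (f g : ℝ → ℝ) : ℝ → ℝ := fun s => f s * deriv g s - deriv f s * g s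

theorem hasDerivAt_wronskian {f g : ℝ → ℝ} {t : ℝ}
    (hf : DifferentiableAt ℝ f t) (hf' : DifferentiableAt ℝ (deriv f) t)
    (hg : DifferentiableAt ℝ g t) (hg' : DifferentiableAt ℝ (deriv g) t) :
    HasDerivAt (wronskian f g) (f t * deriv (deriv g) t - deriv (deriv f) t * g t) t :=
  ((hf.hasDerivAt.mul hg'.hasDerivAt).sub (hf'.hasDerivAt.mul hg.hasDerivAt)).congr_deriv
    (by ring)

theorem deriv_comp_mul_eq_of_eventuallyEq {f x F : ℝ → ℝ} {t S F' : ℝ}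
    (hf : DifferentiableAt ℝ f (x t)) (hx : HasDerivAt x S t) (hF : HasDerivAt F F' t)
    (heq : F =ᶠ[𝓝 t] f ∘ x) :
    deriv f (x t) * S = F' :=
  (hf.hasDerivAt.comp t hx).unique (hF.congr_of_eventuallyEq heq.symm)

theorem differentiableAt_deriv_one_div {w : ℝ → ℝ} {t : ℝ}
    (hw : ∀ᶠ s in 𝓝 t, DifferentiableAt ℝ w s ∧ w s ≠ 0)
    (hw' : DifferentiableAt ℝ (deriv w) t) :
    DifferentiableAt ℝ (deriv fun s => 1 / w s) t := by
  have hderiv : (deriv fun s => 1 / w s) =ᶠ[𝓝 t] fun s => -deriv w s / w s ^ 2 :=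
    hw.mono fun s ⟨hws, hw0⟩ => by simpa only [one_div] using deriv_fun_inv'' hws hw0
  have hwt := hw.self_of_nhds
  exact hderiv.differentiableAt_iff.2 <| hw'.neg.div (hwt.1.pow 2) (pow_ne_zero 2 hwt.2)

theorem one_div_rpow_neg_quarter_sq {X : ℝ} (hX : 0 ≤ X) :
    (1 / X ^ (-(1 : ℝ) / 4)) ^ 2 = √X := by
  rw [one_div, ← Real.rpow_neg hX, Real.sqrt_eq_rpow, ← Real.rpow_natCast,
    ← Real.rpow_mul hX]
  norm_num

theorem sqrt_mul_mul_sqrt_div {P R : ℝ} (hP : 0 ≤ P) (hR : 0 < R) :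
    √(P * R) * √(P / R) = P := by
  rw [← Real.sqrt_mul (mul_nonneg hP hR.le), show P * R * (P / R) = P ^ 2 by field_simp,
    Real.sqrt_sq hP]

theorem mul_sqrt_div {P R : ℝ} (hR : 0 ≤ R) : R * √(P / R) = √(P * R) := by
  rcases hR.eq_or_lt with rfl | hR
  · simp
  · rw [← Real.sqrt_sq hR.le, ← Real.sqrt_mul (sq_nonneg _), Real.sqrt_sq hR.le]
    congr 1
    field_simp

theorem mul_deriv_eq_wronskian {u x v g : ℝ → ℝ} {s S P : ℝ}
    (hu : DifferentiableAt ℝ u (x s)) (hx : HasDerivAt x S s)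
    (hv : DifferentiableAt ℝ v s) (hg : DifferentiableAt ℝ g s) (hg0 : g s ≠ 0)
    (hux : v / g =ᶠ[𝓝 s] u ∘ x) (hP : P = g s ^ 2 * S) :
    P * deriv u (x s) = wronskian g v s := by
  have hchain := deriv_comp_mul_eq_of_eventuallyEq hu hx
    (hv.hasDerivAt.div hg.hasDerivAt hg0) hux
  rw [hP, mul_assoc, mul_comm S, hchain, wronskian]
  field_simp

theorem sturmLiouville_eq_of_schrodinger_eq {D S w r q lam V V'' G'' : ℝ}
    (hw : w ≠ 0) (hr : r ≠ 0) (hS : r * S = (1 / w) ^ 2) (hD : D * S = 1 / w * V'' - G'' * V)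
    (hV : -V'' + (q / r + w * G'') * V = lam * V) :
    -D + q * (w * V) = lam * r * (w * V) := by
  have hS0 : S ≠ 0 := right_ne_zero_of_mul (hS ▸ pow_ne_zero 2 (one_div_ne_zero hw))
  rw [eq_div_of_mul_eq hS0 hD, show S = (1 / w) ^ 2 / r by rw [← hS]; field_simp]
  field_simp at hV ⊢
  linear_combination hV

theorem stmt6_general (α β a b lam : ℝ)
    (p q r : ℝ → ℝ)
    (hp : ∀ y ∈ Set.Ioo a b, 0 < p y) (hr : ∀ y ∈ Set.Ioo a b, 0 < r y)
    (x : ℝ → ℝ)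
    (hx : ∀ t ∈ Set.Ioo α β, HasDerivAt x (Real.sqrt (p (x t) / r (x t))) t)
    (himg : x '' Set.Ioo α β = Set.Ioo a b)
    (w : ℝ → ℝ) (hwdef : ∀ t, w t = (p (x t) * r (x t)) ^ (-(1 : ℝ) / 4))
    (hw : ∀ t ∈ Set.Ioo α β, DifferentiableAt ℝ w t)
    (hw' : ∀ t ∈ Set.Ioo α β, DifferentiableAt ℝ (deriv w) t)
    (v : ℝ → ℝ)
    (hv : ∀ t ∈ Set.Ioo α β, DifferentiableAt ℝ v t)
    (hv' : ∀ t ∈ Set.Ioo α β, DifferentiableAt ℝ (deriv v) t)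
    (heqv : ∀ t ∈ Set.Ioo α β,
      -deriv (deriv v) t
          + (q (x t) / r (x t) + w t * deriv (deriv (fun s => 1 / w s)) t) * v t
        = lam * v t)
    (u : ℝ → ℝ) (hudef : ∀ t ∈ Set.Ioo α β, u (x t) = w t * v t)
    (hu : ∀ y ∈ Set.Ioo a b, DifferentiableAt ℝ u y)
    (hpu : ∀ y ∈ Set.Ioo a b, DifferentiableAt ℝ (fun z => p z * deriv u z) y) :
    ∀ y ∈ Set.Ioo a b,
      -deriv (fun z => p z * deriv u z) y + q y * u y = lam * r y * u y := by
  intro y hy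
  obtain ⟨t, ht, rfl⟩ := himg.symm ▸ hy
  have hmem (s) (hs : s ∈ Set.Ioo α β) : x s ∈ Set.Ioo a b := himg ▸ Set.mem_image_of_mem x hs
  have hnhds (s) (hs : s ∈ Set.Ioo α β) : Set.Ioo α β ∈ 𝓝 s := isOpen_Ioo.mem_nhds hs
  set g : ℝ → ℝ := fun s => 1 / w s
  have hw0 (s) (hs : s ∈ Set.Ioo α β) : w s ≠ 0 := by
    rw [hwdef]
    exact (Real.rpow_pos_of_pos (mul_pos (hp _ (hmem s hs)) (hr _ (hmem s hs))) _).ne'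
  have hg (s) (hs : s ∈ Set.Ioo α β) : DifferentiableAt ℝ g s :=
    (differentiableAt_const 1).div (hw s hs) (hw0 s hs)
  have hg_sq (s) (hs : s ∈ Set.Ioo α β) : g s ^ 2 = √(p (x s) * r (x s)) := by
    simp only [g, hwdef]
    exact one_div_rpow_neg_quarter_sq (mul_pos (hp _ (hmem s hs)) (hr _ (hmem s hs))).le
  have hflux (s) (hs : s ∈ Set.Ioo α β) : p (x s) * deriv u (x s) = wronskian g v s := by
    refine mul_deriv_eq_wronskian (hu _ (hmem s hs)) (hx s hs) (hv s hs) (hg s hs)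
      (one_div_ne_zero (hw0 s hs)) (eventually_of_mem (hnhds s hs) fun s' hs' => ?_) ?_
    · simp only [Pi.div_apply, g, Function.comp_apply, hudef s' hs', one_div, div_inv_eq_mul,
        mul_comm]
    · rw [hg_sq s hs, sqrt_mul_mul_sqrt_div (hp _ (hmem s hs)).le (hr _ (hmem s hs))]
  have hD := deriv_comp_mul_eq_of_eventuallyEq (hpu _ (hmem t ht)) (hx t ht)
    (hasDerivAt_wronskian (hg t ht)
      (differentiableAt_deriv_one_div
        (eventually_of_mem (hnhds t ht) fun s hs => ⟨hw s hs, hw0 s hs⟩) (hw' t ht))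
      (hv t ht) (hv' t ht))
    (eventually_of_mem (hnhds t ht) fun s hs => (hflux s hs).symm)
  rw [hudef t ht]
  exact sturmLiouville_eq_of_schrodinger_eq (hw0 t ht) (hr _ hy).ne'
    ((hg_sq t ht).symm ▸ mul_sqrt_div (hr _ hy).le) hD (heqv t ht)

/-- inverse Liouville transformation. A solution `v` of the
Schrödinger form `−v'' + I·v = λ·v`, with `I = q/r + w·(1/w)''`,
`dx/dt = √(p/r) > 0`, `w = (p·r)^(−1/4)` and `u∘x = w·v`, yields a solution `u`
of the canonical Sturm–Liouville equation on `(a,b) = x((α,β))`. -/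
theorem stmt6 (α β a b lam : ℝ) (hαβ : α < β)
    (p q r : ℝ → ℝ)
    (hp : ∀ y ∈ Set.Ioo a b, 0 < p y) (hr : ∀ y ∈ Set.Ioo a b, 0 < r y)
    (hps : ContDiffOn ℝ 2 p (Set.Ioo a b)) (hrs : ContDiffOn ℝ 2 r (Set.Ioo a b))
    (x : ℝ → ℝ)
    (hx : ∀ t ∈ Set.Ioo α β, HasDerivAt x (Real.sqrt (p (x t) / r (x t))) t)
    (hxpos : ∀ t ∈ Set.Ioo α β, 0 < Real.sqrt (p (x t) / r (x t)))
    (himg : x '' Set.Ioo α β = Set.Ioo a b)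
    (w : ℝ → ℝ) (hwdef : ∀ t, w t = (p (x t) * r (x t)) ^ (-(1 : ℝ) / 4))
    (hw : ∀ t ∈ Set.Ioo α β, DifferentiableAt ℝ w t)
    (hw' : ∀ t ∈ Set.Ioo α β, DifferentiableAt ℝ (deriv w) t)
    (v : ℝ → ℝ)
    (hv : ∀ t ∈ Set.Ioo α β, DifferentiableAt ℝ v t)
    (hv' : ∀ t ∈ Set.Ioo α β, DifferentiableAt ℝ (deriv v) t)
    (heqv : ∀ t ∈ Set.Ioo α β,
      -deriv (deriv v) t
          + (q (x t) / r (x t) + w t * deriv (deriv (fun s => 1 / w s)) t) * v t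
        = lam * v t)
    (u : ℝ → ℝ) (hudef : ∀ t ∈ Set.Ioo α β, u (x t) = w t * v t)
    (hu : ∀ y ∈ Set.Ioo a b, DifferentiableAt ℝ u y)
    (hpu : ∀ y ∈ Set.Ioo a b, DifferentiableAt ℝ (fun z => p z * deriv u z) y) :
    ∀ y ∈ Set.Ioo a b,
      -deriv (fun z => p z * deriv u z) y + q y * u y = lam * r y * u y :=
  stmt6_general α β a b lam p q r hp hr x hx himg w hwdef hw hw' v hv hv' heqv u hudef hu hpu
end

section
/- Let k > 0, m > 0, r₀ > 0, x₀ ∈ ℝ, λ ∈ ℝ, and let ρ be a real root of ρ² − ρ − k = 0 with 2ρ+1 ≠ 0. Set a = −x₀ + m^(2ρ+1)/(r₀(2ρ+1)) and b = −x₀ + (π+m)^(2ρ+1)/(r₀(2ρ+1)), and note a < b and r₀(2ρ+1)(x+x₀) > 0 for x ∈ (a,b). Define p(x) = (1/r₀)·(r₀(2ρ+1)(x+x₀))^(4ρ/(2ρ+1)) and t(x) = −m + (r₀(2ρ+1)(x+x₀))^(1/(2ρ+1)). Suppose v : ℝ → ℝ is twice differentiable and satisfies −v''(t) + (k/(t+m)²)·v(t)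 = λ·v(t) for all t ∈ (0,π), with v(0) = 0 = v(π). Then u(x) = (r₀(2ρ+1)(x+x₀))^(−ρ/(2ρ+1))·v(t(x)) satisfies −(d/dx)(p(x)·u'(x)) = λ·r₀·u(x) for all x ∈ (a,b), and u(a) = 0 = u(b) (where u is extended continuously to the endpoints). -/
/-!
With `σ = t + m = (r₀ (2ρ+1) (x + x₀)) ^ (1/(2ρ+1))`, the interval `(a, b)` is mapped onto
`t ∈ (0, π)`, and `dt/dx = r₀ σ^(-2ρ)`, `p = σ^(4ρ) / r₀`, `u = σ^(-ρ) v(t)`. Hence the flux is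
`p u' = σ^(2ρ) (σ^(-ρ) v)' = σ^ρ v' - ρ σ^(ρ-1) v` (primes in `t` on the right), whose
`t`-derivative is `σ^ρ (v'' - ρ(ρ-1)/σ² v)`. As `ρ(ρ-1) = k`, this equals `-λ σ^ρ v`, and the
factor `dt/dx` turns it into `-λ r₀ u`.
-/

open Real Set Filter Topology

lemma rpow_rpow_div {σ : ℝ} (hσ : 0 ≤ σ) {c : ℝ} (hc : c ≠ 0) (e : ℝ) :
    (σ ^ c) ^ (e / c) = σ ^ e := by
  rw [← rpow_mul hσ, mul_div_cancel₀ e hc]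

lemma strictMonoOn_rpow_div_mul_self {r c : ℝ} (hr : 0 < r) (hc : c ≠ 0) :
    StrictMonoOn (fun y : ℝ => y ^ c / (r * c)) (Ioi 0) := by
  intro y (hy : 0 < y) z _ hyz
  rcases hc.lt_or_gt with hc | hc
  · exact div_lt_div_of_neg_of_lt (mul_neg_of_pos_of_neg hr hc) (rpow_lt_rpow_of_neg hy hyz hc)
  · exact div_lt_div_of_pos_right (rpow_lt_rpow hy.le hyz hc) (mul_pos hr hc)

lemma exists_mem_Ioo_rpow_eq_affine {c r₀ x₀ m₁ m₂ x : ℝ} (hc : c ≠ 0) (hr : 0 < r₀)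
    (hm₁ : 0 < m₁) (hm : m₁ ≤ m₂)
    (hx : x ∈ Ioo (-x₀ + m₁ ^ c / (r₀ * c)) (-x₀ + m₂ ^ c / (r₀ * c))) :
    ∃ σ ∈ Ioo m₁ m₂, σ ^ c = r₀ * c * (x + x₀) := by
  have hcont : ContinuousOn (fun y : ℝ => y ^ c / (r₀ * c)) (Icc m₁ m₂) := fun y hy =>
    ((continuousAt_rpow_const y c (Or.inl (hm₁.trans_le hy.1).ne')).div_const _).continuousWithinAt
  have hy : x + x₀ ∈ Ioo (m₁ ^ c / (r₀ * c)) (m₂ ^ c / (r₀ * c)) := by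
    constructor <;> linarith [hx.1, hx.2]
  obtain ⟨σ, hσ, hσx⟩ := intermediate_value_Ioo hm hcont hy
  refine ⟨σ, hσ, ?_⟩
  rw [div_eq_iff (mul_ne_zero hr.ne' hc)] at hσx
  rw [hσx]; ring

lemma hasDerivAt_add_const_rpow {m s : ℝ} (hs : 0 < s + m) (e : ℝ) :
    HasDerivAt (fun s => (s + m) ^ e) (e * (s + m) ^ (e - 1)) s := by
  simpa using ((hasDerivAt_id s).add_const m).rpow_const (p := e) (Or.inl hs.ne')

section PowerCoordinate

variable {c r₀ x₀ m σ x : ℝ} {t : ℝ → ℝ}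

lemma add_eq_of_rpow_eq_affine (htdef : ∀ x, t x = -m + (r₀ * c * (x + x₀)) ^ (1 / c)) (hc : c ≠ 0)
    (hσ : 0 < σ) (hσx : σ ^ c = r₀ * c * (x + x₀)) : t x + m = σ := by
  rw [htdef, ← hσx, rpow_rpow_div hσ.le hc, rpow_one]
  ring

lemma add_mem_Ioo_of_mem_Ioo_affine (htdef : ∀ x, t x = -m + (r₀ * c * (x + x₀)) ^ (1 / c))
    (hc : c ≠ 0) (hr : 0 < r₀) {m₁ m₂ : ℝ} (hm₁ : 0 < m₁) (hm : m₁ ≤ m₂)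
    (hx : x ∈ Ioo (-x₀ + m₁ ^ c / (r₀ * c)) (-x₀ + m₂ ^ c / (r₀ * c))) :
    t x + m ∈ Ioo m₁ m₂ ∧ (t x + m) ^ c = r₀ * c * (x + x₀) := by
  obtain ⟨σ, hσ, hσx⟩ := exists_mem_Ioo_rpow_eq_affine hc hr hm₁ hm hx
  rw [add_eq_of_rpow_eq_affine htdef hc (hm₁.trans hσ.1) hσx]
  exact ⟨hσ, hσx⟩

lemma hasDerivAt_of_rpow_eq_affine (htdef : ∀ x, t x = -m + (r₀ * c * (x + x₀)) ^ (1 / c))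
    (hc : c ≠ 0) (hσ : 0 < t x + m) (hσx : (t x + m) ^ c = r₀ * c * (x + x₀)) :
    HasDerivAt t (r₀ * (t x + m) ^ (1 - c)) x := by
  have hlin : HasDerivAt (fun x => r₀ * c * (x + x₀)) (r₀ * c) x := by
    simpa using ((hasDerivAt_id x).add_const x₀).const_mul (r₀ * c)
  have hpow :=
    (hlin.rpow_const (p := 1 / c) (Or.inl (hσx ▸ (rpow_pos_of_pos hσ c).ne'))).const_add (-m)
  refine (hpow.congr_of_eventuallyEq (.of_forall htdef)).congr_deriv ?_
  rw [← hσx, show 1 / c - 1 = (1 - c) / c by field_simp, rpow_rpow_div hσ.le hc]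
  field_simp

end PowerCoordinate

section Liouville

variable {v : ℝ → ℝ} {m s : ℝ}

lemma hasDerivAt_rpow_neg_mul (ρ : ℝ) (hs : 0 < s + m) (hv : DifferentiableAt ℝ v s) :
    HasDerivAt (fun s => (s + m) ^ (-ρ) * v s)
      ((s + m) ^ (-ρ) * deriv v s - ρ * (s + m) ^ (-ρ - 1) * v s) s :=
  ((hasDerivAt_add_const_rpow hs (-ρ)).mul hv.hasDerivAt).congr_deriv (by ring)

lemma hasDerivAt_flux (ρ : ℝ) (hs : 0 < s + m) (hv : DifferentiableAt ℝ v s)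
    (hv' : DifferentiableAt ℝ (deriv v) s) :
    HasDerivAt (fun s => (s + m) ^ ρ * deriv v s - ρ * (s + m) ^ (ρ - 1) * v s)
      ((s + m) ^ ρ * (deriv (deriv v) s - ρ * (ρ - 1) / (s + m) ^ 2 * v s)) s := by
  refine (((hasDerivAt_add_const_rpow hs ρ).mul hv'.hasDerivAt).sub
    (((hasDerivAt_add_const_rpow hs (ρ - 1)).const_mul ρ).mul hv.hasDerivAt)).congr_deriv ?_
  rw [show ρ - 1 - 1 = ρ - 2 by ring, rpow_sub hs ρ 2, rpow_two]
  field_simp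
  ring

end Liouville

theorem liouville_transform {t p u v : ℝ → ℝ} {S : Set ℝ} (hS : IsOpen S) {m r₀ ρ k lam x : ℝ}
    (hr : r₀ ≠ 0) (hx : x ∈ S)
    (ht : ∀ z ∈ S, 0 < t z + m ∧ HasDerivAt t (r₀ * (t z + m) ^ (-2 * ρ)) z)
    (hp : ∀ z ∈ S, p z = (t z + m) ^ (4 * ρ) / r₀)
    (hu : ∀ z ∈ S, u z = (t z + m) ^ (-ρ) * v (t z))
    (hv : ∀ s, DifferentiableAt ℝ v s) (hv' : ∀ s, DifferentiableAt ℝ (deriv v) s)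
    (hρ : ρ * (ρ - 1) = k)
    (heq : -deriv (deriv v) (t x) + k / (t x + m) ^ 2 * v (t x) = lam * v (t x)) :
    -deriv (fun z => p z * deriv u z) x = lam * r₀ * u x := by
  have hflux : ∀ z ∈ S, p z * deriv u z =
      (t z + m) ^ ρ * deriv v (t z) - ρ * (t z + m) ^ (ρ - 1) * v (t z) := by
    intro z hz
    obtain ⟨hσ, htz⟩ := ht z hz
    have hu_eq : u =ᶠ[𝓝 z] (fun s => (s + m) ^ (-ρ) * v s) ∘ t :=
      eventually_of_mem (hS.mem_nhds hz) hu
    rw [hu_eq.deriv_eq, ((hasDerivAt_rpow_neg_mul ρ hσ (hv (t z))).comp z htz).deriv, hp z hz]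
    have e₁ : (t z + m) ^ (4 * ρ) * (t z + m) ^ (-2 * ρ) * (t z + m) ^ (-ρ) = (t z + m) ^ ρ := by
      rw [← rpow_add hσ, ← rpow_add hσ]; ring_nf
    have e₂ : (t z + m) ^ (4 * ρ) * (t z + m) ^ (-2 * ρ) * (t z + m) ^ (-ρ - 1) =
        (t z + m) ^ (ρ - 1) := by
      rw [← rpow_add hσ, ← rpow_add hσ]; ring_nf
    rw [div_mul_eq_mul_div, div_eq_iff hr]
    linear_combination r₀ * deriv v (t z) * e₁ - r₀ * ρ * v (t z) * e₂
  obtain ⟨hσ, htx⟩ := ht x hx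
  have hpu_eq : (fun z => p z * deriv u z) =ᶠ[𝓝 x]
      (fun s => (s + m) ^ ρ * deriv v s - ρ * (s + m) ^ (ρ - 1) * v s) ∘ t :=
    eventually_of_mem (hS.mem_nhds hx) hflux
  rw [hpu_eq.deriv_eq, ((hasDerivAt_flux ρ hσ (hv _) (hv' _)).comp x htx).deriv, hu x hx, hρ,
    show deriv (deriv v) (t x) - k / (t x + m) ^ 2 * v (t x) = -(lam * v (t x)) by linarith]
  have e : (t x + m) ^ ρ * (t x + m) ^ (-2 * ρ) = (t x + m) ^ (-ρ) := by
    rw [← rpow_add hσ]; ring_nf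
  linear_combination lam * r₀ * v (t x) * e

theorem stmt8_general (k m r₀ x₀ lam ρ : ℝ) (hm : 0 < m) (hr : 0 < r₀)
    (hρ : ρ ^ 2 - ρ - k = 0) (hρ1 : 2 * ρ + 1 ≠ 0)
    (a b : ℝ)
    (ha : a = -x₀ + m ^ (2 * ρ + 1) / (r₀ * (2 * ρ + 1)))
    (hb : b = -x₀ + (Real.pi + m) ^ (2 * ρ + 1) / (r₀ * (2 * ρ + 1)))
    (v : ℝ → ℝ)
    (hv : ∀ s, DifferentiableAt ℝ v s) (hv' : ∀ s, DifferentiableAt ℝ (deriv v) s)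
    (heq : ∀ s ∈ Set.Ioo 0 Real.pi,
      -deriv (deriv v) s + (k / (s + m) ^ 2) * v s = lam * v s)
    (hv0 : v 0 = 0) (hvπ : v Real.pi = 0)
    (p t u : ℝ → ℝ)
    (hpdef : ∀ x, p x =
      (1 / r₀) * (r₀ * (2 * ρ + 1) * (x + x₀)) ^ (4 * ρ / (2 * ρ + 1)))
    (htdef : ∀ x, t x =
      -m + (r₀ * (2 * ρ + 1) * (x + x₀)) ^ (1 / (2 * ρ + 1)))
    (hudef : ∀ x, u x =
      (r₀ * (2 * ρ + 1) * (x + x₀)) ^ (-ρ / (2 * ρ + 1)) * v (t x)) :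
    a < b ∧ (∀ x ∈ Set.Ioo a b, 0 < r₀ * (2 * ρ + 1) * (x + x₀)) ∧
    (∀ x ∈ Set.Ioo a b,
      -deriv (fun z => p z * deriv u z) x = lam * r₀ * u x) ∧
    u a = 0 ∧ u b = 0 := by
  have hπm : m < π + m := by linarith [pi_pos]
  have hcoord : ∀ x ∈ Ioo a b, t x + m ∈ Ioo m (π + m) ∧
      (t x + m) ^ (2 * ρ + 1) = r₀ * (2 * ρ + 1) * (x + x₀) := fun x hx =>
    add_mem_Ioo_of_mem_Ioo_affine htdef hρ1 hr hm hπm.le (ha ▸ hb ▸ hx)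
  have hu_zero : ∀ x σ, 0 < σ → σ ^ (2 * ρ + 1) = r₀ * (2 * ρ + 1) * (x + x₀) →
      v (σ - m) = 0 → u x = 0 := fun x σ hσ hσx hvσ => by
    rw [hudef, eq_sub_of_add_eq (add_eq_of_rpow_eq_affine htdef hρ1 hσ hσx), hvσ, mul_zero]
  refine ⟨by rw [ha, hb]; linarith [strictMonoOn_rpow_div_mul_self hr hρ1 hm (hm.trans hπm) hπm],
    fun x hx => (hcoord x hx).2 ▸ rpow_pos_of_pos (hm.trans (hcoord x hx).1.1) _, fun x hx => ?_,
    hu_zero a m hm (by rw [ha]; field_simp; ring) (by simpa using hv0),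
    hu_zero b (π + m) (hm.trans hπm) (by rw [hb]; field_simp; ring) (by simpa using hvπ)⟩
  have hρk : ρ * (ρ - 1) = k := by linear_combination hρ
  refine liouville_transform (t := t) isOpen_Ioo hr.ne' hx (fun z hz => ?_) (fun z hz => ?_)
    (fun z hz => ?_) hv hv' hρk (heq _ ?_)
  · obtain ⟨hσ, hσz⟩ := hcoord z hz
    rw [show -2 * ρ = 1 - (2 * ρ + 1) by ring]
    exact ⟨hm.trans hσ.1, hasDerivAt_of_rpow_eq_affine htdef hρ1 (hm.trans hσ.1) hσz⟩
  · rw [hpdef, ← (hcoord z hz).2, rpow_rpow_div (hm.trans (hcoord z hz).1.1).le hρ1]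
    ring
  · rw [hudef, ← (hcoord z hz).2, rpow_rpow_div (hm.trans (hcoord z hz).1.1).le hρ1]
  · constructor <;> linarith [(hcoord x hx).1.1, (hcoord x hx).1.2]

/-- the generalized second Paine–de Hoog–Anderson problem
`−v'' + (k/(t+m)²)·v = λ·v` on `(0,π)` with Dirichlet conditions transforms back
to the canonical form `−(p·u')' = λ·r₀·u` with vanishing potential and constant
density, where `ρ` is a root of `ρ² − ρ − k = 0`. -/
theorem stmt8 (k m r₀ x₀ lam ρ : ℝ) (hk : 0 < k) (hm : 0 < m) (hr : 0 < r₀)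
    (hρ : ρ ^ 2 - ρ - k = 0) (hρ1 : 2 * ρ + 1 ≠ 0)
    (a b : ℝ)
    (ha : a = -x₀ + m ^ (2 * ρ + 1) / (r₀ * (2 * ρ + 1)))
    (hb : b = -x₀ + (Real.pi + m) ^ (2 * ρ + 1) / (r₀ * (2 * ρ + 1)))
    (v : ℝ → ℝ)
    (hv : ∀ s, DifferentiableAt ℝ v s) (hv' : ∀ s, DifferentiableAt ℝ (deriv v) s)
    (heq : ∀ s ∈ Set.Ioo 0 Real.pi,
      -deriv (deriv v) s + (k / (s + m) ^ 2) * v s = lam * v s)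
    (hv0 : v 0 = 0) (hvπ : v Real.pi = 0)
    (p t u : ℝ → ℝ)
    (hpdef : ∀ x, p x =
      (1 / r₀) * (r₀ * (2 * ρ + 1) * (x + x₀)) ^ (4 * ρ / (2 * ρ + 1)))
    (htdef : ∀ x, t x =
      -m + (r₀ * (2 * ρ + 1) * (x + x₀)) ^ (1 / (2 * ρ + 1)))
    (hudef : ∀ x, u x =
      (r₀ * (2 * ρ + 1) * (x + x₀)) ^ (-ρ / (2 * ρ + 1)) * v (t x)) :
    a < b ∧ (∀ x ∈ Set.Ioo a b, 0 < r₀ * (2 * ρ + 1) * (x + x₀)) ∧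
    (∀ x ∈ Set.Ioo a b,
      -deriv (fun z => p z * deriv u z) x = lam * r₀ * u x) ∧
    u a = 0 ∧ u b = 0 :=
  stmt8_general k m r₀ x₀ lam ρ hm hr hρ hρ1 a b ha hb v hv hv' heq hv0 hvπ p t u hpdef htdef hudef
end

section
/- Let k = 3/4, m > 0, r₀ > 0, x₀ ∈ ℝ, λ ∈ ℝ. Set a = −x₀ + m⁴/(4r₀) and b = −x₀ + (π+m)⁴/(4r₀), define t(x) = −m + (4r₀(x+x₀))^(1/4), and suppose v : ℝ → ℝ is twice differentiable and satisfies −v''(t) + (3/(4(t+m)²))·v(t) = λ·v(t) for all t ∈ (0,π), with v(0) = 0 = v(π). Then u(x) = (4r₀(x+x₀))^(−3/8)·v(t(x)) satisfies −(d/dx)(8√r₀·(x+x₀)^(3/2)·u'(x)) = λ·r₀·u(x) for all x ∈ (a,b), and u(a) = 0 = u(b). -/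
/-!
Substitute `s = (4 r₀ (x + x₀))^(1/8)`, so that `t + m = s²` and `ds/dx = r₀ / (2 s⁷)`: every
fractional power becomes an integral power of `s`. Then `u = v(s² - m) / s³`, and the flux
`8 √r₀ (x + x₀)^(3/2) u'` equals `F(s) = s³ v'(s² - m) - (3/2) s v(s² - m)`, whose derivative
`2 s⁴ v'' - (3/2) v` is `-2 λ s⁴ v` by the equation `v'' = (3 / (4 s⁴) - λ) v`. Multiplying by
`ds/dx` gives `-λ r₀ u`. The endpoints `a`, `b` are where `s² - m` equals `0` and `π`.
-/

open Real Set Filter Topology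

theorem Real.rpow_div_natCast_eq_pow {w : ℝ} (hw : 0 ≤ w) (k n : ℕ) :
    w ^ ((k : ℝ) / n) = (w ^ (1 / n : ℝ)) ^ k := by
  rw [← rpow_mul_natCast hw]; ring_nf

theorem HasDerivAt.rpow_one_div_natCast {f : ℝ → ℝ} {f' z : ℝ} {n : ℕ} (hn : n ≠ 0)
    (hf : HasDerivAt f f' z) (hpos : 0 < f z) :
    HasDerivAt (fun z => f z ^ (1 / n : ℝ)) (f' / (n * (f z ^ (1 / n : ℝ)) ^ (n - 1))) z := by
  have hroot : (f z ^ (1 / n : ℝ)) ^ n = f z := by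
    rw [one_div, rpow_inv_natCast_pow hpos.le hn]
  convert hf.rpow_const (p := 1 / n) (Or.inl hpos.ne') using 1
  have hroot_pos : 0 < f z ^ (1 / n : ℝ) := rpow_pos_of_pos hpos _
  rw [rpow_sub_one hpos.ne']
  set σ := f z ^ (1 / n : ℝ)
  rw [← hroot]
  obtain ⟨k, rfl⟩ := Nat.exists_eq_succ_of_ne_zero hn
  field_simp
  simp only [Nat.succ_sub_one, pow_succ]
  ring

namespace SecondPdHA

/-- `u` in the variable `s = (4 r₀ (x + x₀))^(1/8)`. -/
noncomputable def pullback (v : ℝ → ℝ) (m s : ℝ) : ℝ := v (s ^ 2 - m) / s ^ 3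

/-- `8 √r₀ (x + x₀)^(3/2) u'(x)` in the variable `s`. -/
noncomputable def flux (v : ℝ → ℝ) (m s : ℝ) : ℝ :=
  s ^ 3 * deriv v (s ^ 2 - m) - 3 / 2 * s * v (s ^ 2 - m)

section SVariable

variable {v : ℝ → ℝ} {m : ℝ}

theorem hasDerivAt_comp_sq_sub {f : ℝ → ℝ} (hf : ∀ s, DifferentiableAt ℝ f s) (s : ℝ) :
    HasDerivAt (fun s => f (s ^ 2 - m)) (deriv f (s ^ 2 - m) * (2 * s)) s := by
  have : HasDerivAt (fun s => s ^ 2 - m) (2 * s) s := by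
    simpa using (hasDerivAt_pow 2 s).sub_const m
  exact (hf _).hasDerivAt.comp s this

theorem hasDerivAt_pullback (hv : ∀ s, DifferentiableAt ℝ v s) {s : ℝ} (hs : s ≠ 0) :
    HasDerivAt (pullback v m)
      ((2 * s ^ 2 * deriv v (s ^ 2 - m) - 3 * v (s ^ 2 - m)) / s ^ 4) s := by
  have h := (hasDerivAt_comp_sq_sub (m := m) hv s).fun_div (hasDerivAt_pow 3 s) (pow_ne_zero 3 hs)
  exact h.congr_deriv (by field_simp; ring)

theorem hasDerivAt_flux (hv : ∀ s, DifferentiableAt ℝ v s)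
    (hv' : ∀ s, DifferentiableAt ℝ (deriv v) s) (s : ℝ) :
    HasDerivAt (flux v m)
      (2 * s ^ 4 * deriv (deriv v) (s ^ 2 - m) - 3 / 2 * v (s ^ 2 - m)) s := by
  have h := ((hasDerivAt_pow 3 s).mul (hasDerivAt_comp_sq_sub (m := m) hv' s)).sub
    (((hasDerivAt_id s).const_mul (3 / 2)).mul (hasDerivAt_comp_sq_sub (m := m) hv s))
  exact h.congr_deriv (by simp only [id]; push_cast; ring)

theorem hasDerivAt_flux_of_ode (hv : ∀ s, DifferentiableAt ℝ v s)
    (hv' : ∀ s, DifferentiableAt ℝ (deriv v) s) {lam s : ℝ} (hs : s ≠ 0)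
    (hode : -deriv (deriv v) (s ^ 2 - m) + 3 / (4 * (s ^ 2 - m + m) ^ 2) * v (s ^ 2 - m)
      = lam * v (s ^ 2 - m)) :
    HasDerivAt (flux v m) (-2 * lam * s ^ 4 * v (s ^ 2 - m)) s := by
  rw [sub_add_cancel, ← pow_mul] at hode
  have hv'' : deriv (deriv v) (s ^ 2 - m) = (3 / (4 * s ^ 4) - lam) * v (s ^ 2 - m) := by
    linarith
  refine (hasDerivAt_flux hv hv' s).congr_deriv ?_
  rw [hv'']
  field_simp
  ring

end SVariable

noncomputable def eighthRoot (r₀ x₀ z : ℝ) : ℝ := (4 * r₀ * (z + x₀)) ^ (1 / 8 : ℝ)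

section EighthRoot

variable {r₀ x₀ z : ℝ}

theorem eighthRoot_pos (hr : 0 < r₀) (hz : -x₀ < z) : 0 < eighthRoot r₀ x₀ z :=
  rpow_pos_of_pos (by nlinarith) _

theorem rpow_eq_eighthRoot_pow (hw : 0 ≤ 4 * r₀ * (z + x₀)) (k : ℕ) :
    (4 * r₀ * (z + x₀)) ^ ((k : ℝ) / 8) = eighthRoot r₀ x₀ z ^ k := by
  exact_mod_cast rpow_div_natCast_eq_pow hw k 8

theorem rpow_one_div_four_eq_eighthRoot_sq (hw : 0 ≤ 4 * r₀ * (z + x₀)) :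
    (4 * r₀ * (z + x₀)) ^ ((1 : ℝ) / 4) = eighthRoot r₀ x₀ z ^ 2 := by
  rw [← rpow_eq_eighthRoot_pow hw 2]; norm_num

theorem rpow_neg_three_div_eight_eq_eighthRoot_pow (hw : 0 ≤ 4 * r₀ * (z + x₀)) :
    (4 * r₀ * (z + x₀)) ^ (-(3 : ℝ) / 8) = (eighthRoot r₀ x₀ z ^ 3)⁻¹ := by
  rw [neg_div, rpow_neg hw, ← rpow_eq_eighthRoot_pow hw 3]; norm_num

theorem eighthRoot_sq_eq {s : ℝ} (hs : 0 ≤ s) (hw : 4 * r₀ * (z + x₀) = s ^ 4) :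
    eighthRoot r₀ x₀ z ^ 2 = s := by
  have hw0 : 0 ≤ 4 * r₀ * (z + x₀) := hw ▸ by positivity
  have hσ : 0 ≤ eighthRoot r₀ x₀ z ^ 2 := pow_nonneg (rpow_nonneg hw0 _) 2
  rw [← pow_left_inj₀ hσ hs four_ne_zero, ← pow_mul,
    ← rpow_eq_eighthRoot_pow hw0 8, ← hw]
  norm_num

theorem eighthRoot_sq_sub_mem_Ioo {m L : ℝ} (hm : 0 ≤ m) (hL : 0 ≤ L)
    (hw : 4 * r₀ * (z + x₀) ∈ Ioo (m ^ 4) ((L + m) ^ 4)) :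
    eighthRoot r₀ x₀ z ^ 2 - m ∈ Ioo 0 L := by
  have hw0 : 0 ≤ 4 * r₀ * (z + x₀) := (pow_nonneg hm 4).trans hw.1.le
  have hσ : 0 ≤ eighthRoot r₀ x₀ z ^ 2 := pow_nonneg (rpow_nonneg hw0 _) 2
  have h8 : (eighthRoot r₀ x₀ z ^ 2) ^ 4 = 4 * r₀ * (z + x₀) := by
    rw [← pow_mul, ← rpow_eq_eighthRoot_pow hw0 8]; norm_num
  rw [← h8] at hw
  have hlo := (pow_lt_pow_iff_left₀ hm hσ four_ne_zero).mp hw.1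
  have hhi := (pow_lt_pow_iff_left₀ hσ (by linarith) four_ne_zero).mp hw.2
  constructor <;> linarith

theorem hasDerivAt_eighthRoot (hr : 0 < r₀) (hz : -x₀ < z) :
    HasDerivAt (eighthRoot r₀ x₀) (r₀ / (2 * eighthRoot r₀ x₀ z ^ 7)) z := by
  have hlin : HasDerivAt (fun z => 4 * r₀ * (z + x₀)) (4 * r₀) z := by
    simpa using ((hasDerivAt_id z).add_const x₀).const_mul (4 * r₀)
  have := hlin.rpow_one_div_natCast (n := 8) (by norm_num) (by nlinarith)
  convert this using 1
  · ext; norm_num [eighthRoot]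
  · simp only [eighthRoot]; norm_num; ring

theorem sqrt_mul_rpow_three_halves_eq_eighthRoot_pow (hr : 0 < r₀) (hz : -x₀ < z) :
    8 * √r₀ * (z + x₀) ^ (3 / 2 : ℝ) = eighthRoot r₀ x₀ z ^ 12 / r₀ := by
  have hfour : (4 * r₀) ^ (3 / 2 : ℝ) = 8 * r₀ * √r₀ := by
    rw [show (3 / 2 : ℝ) = 1 / 2 * (3 : ℕ) by norm_num, rpow_mul_natCast (by positivity),
      ← sqrt_eq_rpow, sqrt_mul' _ hr.le, show √4 = 2 by
        rw [show (4 : ℝ) = 2 ^ 2 by norm_num, sqrt_sq zero_le_two]]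
    ring_nf
    rw [show √r₀ ^ 3 = √r₀ ^ 2 * √r₀ by ring, sq_sqrt hr.le]
    ring
  rw [← rpow_eq_eighthRoot_pow (by nlinarith), mul_rpow (by positivity) (by linarith)]
  norm_num [hfour]
  field_simp

end EighthRoot

section Transform

variable {u v : ℝ → ℝ} {r₀ x₀ m z : ℝ}

theorem mul_deriv_eq_flux (hr : 0 < r₀) (hv : ∀ s, DifferentiableAt ℝ v s)
    (hu : ∀ z, -x₀ < z → u z = pullback v m (eighthRoot r₀ x₀ z)) (hz : -x₀ < z) :
    8 * √r₀ * (z + x₀) ^ (3 / 2 : ℝ) * deriv u z = flux v m (eighthRoot r₀ x₀ z) := by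
  have hσ := eighthRoot_pos hr hz
  have hu_eq : u =ᶠ[𝓝 z] pullback v m ∘ eighthRoot r₀ x₀ := by
    filter_upwards [Ioi_mem_nhds hz] with y hy using hu y hy
  have hu' := ((hasDerivAt_pullback (m := m) hv hσ.ne').comp z (hasDerivAt_eighthRoot hr hz))
  rw [(hu'.congr_of_eventuallyEq hu_eq).deriv,
    sqrt_mul_rpow_three_halves_eq_eighthRoot_pow hr hz, flux]
  field_simp

theorem neg_deriv_flux_comp_eighthRoot {lam : ℝ} (hr : 0 < r₀) (hv : ∀ s, DifferentiableAt ℝ v s)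
    (hv' : ∀ s, DifferentiableAt ℝ (deriv v) s) (hz : -x₀ < z)
    (hode : -deriv (deriv v) (eighthRoot r₀ x₀ z ^ 2 - m)
      + 3 / (4 * (eighthRoot r₀ x₀ z ^ 2 - m + m) ^ 2) * v (eighthRoot r₀ x₀ z ^ 2 - m)
      = lam * v (eighthRoot r₀ x₀ z ^ 2 - m)) :
    -deriv (flux v m ∘ eighthRoot r₀ x₀) z = lam * r₀ * pullback v m (eighthRoot r₀ x₀ z) := by
  have hσ := eighthRoot_pos hr hz
  rw [((hasDerivAt_flux_of_ode hv hv' hσ.ne' hode).comp z (hasDerivAt_eighthRoot hr hz)).deriv,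
    pullback]
  field_simp

end Transform

end SecondPdHA

open SecondPdHA

/-- for `k = 3/4` (root `ρ₁ = 3/2`), the second PdHA problem
transforms to the canonical form `−(8√r₀·(x+x₀)^(3/2)·u')' = λ·r₀·u`
with Dirichlet boundary conditions. -/
theorem stmt10 (m r₀ x₀ lam : ℝ) (hm : 0 < m) (hr : 0 < r₀)
    (a b : ℝ)
    (ha : a = -x₀ + m ^ 4 / (4 * r₀))
    (hb : b = -x₀ + (Real.pi + m) ^ 4 / (4 * r₀))
    (v : ℝ → ℝ)
    (hv : ∀ s, DifferentiableAt ℝ v s) (hv' : ∀ s, DifferentiableAt ℝ (deriv v) s)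
    (heq : ∀ s ∈ Set.Ioo 0 Real.pi,
      -deriv (deriv v) s + (3 / (4 * (s + m) ^ 2)) * v s = lam * v s)
    (hv0 : v 0 = 0) (hvπ : v Real.pi = 0)
    (t u : ℝ → ℝ)
    (htdef : ∀ x, t x = -m + (4 * r₀ * (x + x₀)) ^ ((1 : ℝ) / 4))
    (hudef : ∀ x, u x = (4 * r₀ * (x + x₀)) ^ (-(3 : ℝ) / 8) * v (t x)) :
    (∀ x ∈ Set.Ioo a b,
      -deriv (fun z => 8 * Real.sqrt r₀ * (z + x₀) ^ ((3 : ℝ) / 2) * deriv u z) x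
        = lam * r₀ * u x) ∧
    u a = 0 ∧ u b = 0 := by
  have ht : ∀ z, 0 ≤ 4 * r₀ * (z + x₀) → t z = eighthRoot r₀ x₀ z ^ 2 - m := fun z hw => by
    rw [htdef, rpow_one_div_four_eq_eighthRoot_sq hw]; ring
  have hu : ∀ z, -x₀ < z → u z = pullback v m (eighthRoot r₀ x₀ z) := fun z hz => by
    have hw : 0 ≤ 4 * r₀ * (z + x₀) := by nlinarith
    rw [hudef, ht z hw, rpow_neg_three_div_eight_eq_eighthRoot_pow hw, pullback, div_eq_inv_mul]
  have hvanish : ∀ z s, 0 ≤ s → 4 * r₀ * (z + x₀) = s ^ 4 → v (s - m) = 0 → u z = 0 :=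
    fun z s hs hw hvs => by
      rw [hudef, ht z (hw ▸ by positivity), eighthRoot_sq_eq hs hw, hvs, mul_zero]
  subst ha hb
  refine ⟨fun x hx => ?_,
    hvanish _ m hm.le (by field_simp; ring) (by rwa [sub_self]),
    hvanish _ (π + m) (by positivity) (by field_simp; ring) (by rwa [add_sub_cancel_right])⟩
  have hc : 0 < 4 * r₀ := by positivity
  have hwx : 4 * r₀ * (x + x₀) ∈ Ioo (m ^ 4) ((π + m) ^ 4) :=
    ⟨(div_lt_iff₀' hc).mp (by linarith [hx.1]), (lt_div_iff₀' hc).mp (by linarith [hx.2])⟩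
  have hx0 : -x₀ < x := by linarith [hx.1, div_pos (pow_pos hm 4) hc]
  have hflux : (fun z => 8 * √r₀ * (z + x₀) ^ (3 / 2 : ℝ) * deriv u z)
      =ᶠ[𝓝 x] flux v m ∘ eighthRoot r₀ x₀ := by
    filter_upwards [Ioi_mem_nhds hx0] with z hz using mul_deriv_eq_flux hr hv hu hz
  rw [hflux.deriv_eq, hu x hx0]
  exact neg_deriv_flux_comp_eighthRoot hr hv hv' hx0
    (heq _ (eighthRoot_sq_sub_mem_Ioo hm.le pi_pos.le hwx))
end

section
/- Let k = 3/4, m > 0, r₀ > 0, x₀ ∈ ℝ, λ ∈ ℝ. Set a = −x₀ + (ln m)/r₀ and b = −x₀ + (ln(π+m))/r₀, define t(x) = −m + e^(r₀(x+x₀)), and suppose v : ℝ → ℝ is twice differentiable and satisfies −v''(t) + (3/(4(t+m)²))·v(t) = λ·v(t) for all t ∈ (0,π), with v(0) = 0 = v(π). Then u(x) = e^(r₀(x+x₀)/2)·v(t(x)) satisfies −(d/dx)((1/r₀)·e^(−2r₀(x+x₀))·u'(x)) = λ·r₀·u(x) for all x ∈ (a,b), and u(a) = 0 = u(b). -/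
/-!
With `q = exp (r₀ (x + x₀) / 2)` the substitution `s = t x = q² - m` has `t' = r₀ q²`,
and the flux is `(1/r₀) q⁻⁴ u' = q⁻³ v(s) / 2 + q⁻¹ v'(s)`. Differentiating once more,
the two `v'` terms cancel and what is left is `r₀ q (v''(s) - 3 v(s) / (4 q⁴))`, where
`q⁴ = (s + m)²`. Since `t` is strictly increasing with `t a = 0` and `t b = π`, it maps
`(a, b)` into `(0, π)` and the boundary conditions carry over.
-/

open Real Set

lemma hasDerivAt_exp_mul_add (c x₀ x : ℝ) :
    HasDerivAt (fun z => exp (c * (z + x₀))) (c * exp (c * (x + x₀))) x := by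
  simpa [mul_comm] using (((hasDerivAt_id x).add_const x₀).const_mul c).exp

lemma hasDerivAt_exp_mul_add_div (c x₀ d x : ℝ) :
    HasDerivAt (fun z => exp (c * (z + x₀) / d)) (c / d * exp (c * (x + x₀) / d)) x := by
  simpa only [mul_div_right_comm] using hasDerivAt_exp_mul_add (c / d) x₀ x

lemma exp_eq_exp_half_sq (s : ℝ) : exp s = exp (s / 2) ^ 2 := by
  rw [← exp_nat_mul]; ring_nf

lemma exp_neg_two_mul_mul_eq_inv_pow (r y : ℝ) :
    exp (-2 * r * y) = (exp (r * y / 2) ^ 4)⁻¹ := by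
  rw [← exp_nat_mul, ← exp_neg]; ring_nf

section LiouvilleSubstitution

variable {m r x₀ : ℝ} {v : ℝ → ℝ}

lemma strictMono_neg_add_exp_mul_add (hr : 0 < r) :
    StrictMono (fun x => -m + exp (r * (x + x₀))) := by
  intro x y h
  dsimp only
  gcongr

lemma exp_mul_neg_add_log_div_add (hr : r ≠ 0) {c : ℝ} (hc : 0 < c) :
    exp (r * (-x₀ + log c / r + x₀)) = c := by
  rw [show r * (-x₀ + log c / r + x₀) = log c by field_simp; ring, exp_log hc]

lemma hasDerivAt_liouvilleTransform (hv : Differentiable ℝ v) (x : ℝ) :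
    HasDerivAt (fun z => exp (r * (z + x₀) / 2) * v (-m + exp (r * (z + x₀))))
      (r * exp (r * (x + x₀) / 2) * (v (-m + exp (r * (x + x₀))) / 2 +
        exp (r * (x + x₀)) * deriv v (-m + exp (r * (x + x₀))))) x := by
  have hq := hasDerivAt_exp_mul_add_div r x₀ 2 x
  have ht := (hv _).hasDerivAt.comp x ((hasDerivAt_exp_mul_add r x₀ x).const_add (-m))
  exact (hq.mul ht).congr_deriv (by rw [Function.comp_apply]; ring)

lemma hasDerivAt_liouvilleFlux (hr : r ≠ 0) (hv : Differentiable ℝ v)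
    (hv' : Differentiable ℝ (deriv v)) (x : ℝ) :
    HasDerivAt (fun z => (1 / r) * exp (-2 * r * (z + x₀)) *
        deriv (fun z => exp (r * (z + x₀) / 2) * v (-m + exp (r * (z + x₀)))) z)
      (r * exp (r * (x + x₀) / 2) * (deriv (deriv v) (-m + exp (r * (x + x₀))) -
        3 / (4 * (-m + exp (r * (x + x₀)) + m) ^ 2) * v (-m + exp (r * (x + x₀))))) x := by
  set t : ℝ → ℝ := fun z => -m + exp (r * (z + x₀)) with ht_def
  have hderiv : deriv (fun z => exp (r * (z + x₀) / 2) * v (t z)) =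
      fun z => r * exp (r * (z + x₀) / 2) *
        (v (t z) / 2 + exp (r * (z + x₀)) * deriv v (t z)) :=
    funext fun z => (hasDerivAt_liouvilleTransform hv z).deriv
  have hq := hasDerivAt_exp_mul_add_div r x₀ 2 x
  have hE := hasDerivAt_exp_mul_add r x₀ x
  have ht : HasDerivAt t (r * exp (r * (x + x₀))) x := hE.const_add (-m)
  have hvt := (hv (t x)).hasDerivAt.comp x ht
  have hv't := (hv' (t x)).hasDerivAt.comp x ht
  have hflux := ((hasDerivAt_exp_mul_add (-2 * r) x₀ x).const_mul (1 / r)).mul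
    ((hq.const_mul r).mul ((hvt.div_const 2).add (hE.mul hv't)))
  rw [hderiv]
  refine hflux.congr_deriv ?_
  simp only [Pi.mul_apply, Pi.add_apply, Function.comp_apply, ht_def]
  rw [neg_add_cancel_comm, exp_neg_two_mul_mul_eq_inv_pow,
    exp_eq_exp_half_sq (r * (x + x₀))]
  field_simp
  ring

end LiouvilleSubstitution

/-- for `k = 3/4` (root `ρ₂ = −1/2`), the second PdHA problem
transforms to the canonical form `−((1/r₀)·e^(−2r₀(x+x₀))·u')' = λ·r₀·u`
with Dirichlet boundary conditions. -/
theorem stmt11 (m r₀ x₀ lam : ℝ) (hm : 0 < m) (hr : 0 < r₀)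
    (a b : ℝ)
    (ha : a = -x₀ + Real.log m / r₀)
    (hb : b = -x₀ + Real.log (Real.pi + m) / r₀)
    (v : ℝ → ℝ)
    (hv : ∀ s, DifferentiableAt ℝ v s) (hv' : ∀ s, DifferentiableAt ℝ (deriv v) s)
    (heq : ∀ s ∈ Set.Ioo 0 Real.pi,
      -deriv (deriv v) s + (3 / (4 * (s + m) ^ 2)) * v s = lam * v s)
    (hv0 : v 0 = 0) (hvπ : v Real.pi = 0)
    (t u : ℝ → ℝ)
    (htdef : ∀ x, t x = -m + Real.exp (r₀ * (x + x₀)))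
    (hudef : ∀ x, u x = Real.exp (r₀ * (x + x₀) / 2) * v (t x)) :
    (∀ x ∈ Set.Ioo a b,
      -deriv (fun z => (1 / r₀) * Real.exp (-2 * r₀ * (z + x₀)) * deriv u z) x
        = lam * r₀ * u x) ∧
    u a = 0 ∧ u b = 0 := by
  obtain rfl : t = fun x => -m + exp (r₀ * (x + x₀)) := funext htdef
  obtain rfl : u = fun x => exp (r₀ * (x + x₀) / 2) * v (-m + exp (r₀ * (x + x₀))) :=
    funext hudef
  have hta : -m + exp (r₀ * (a + x₀)) = 0 := by
    rw [ha, exp_mul_neg_add_log_div_add hr.ne' hm, neg_add_cancel]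
  have htb : -m + exp (r₀ * (b + x₀)) = π := by
    rw [hb, exp_mul_neg_add_log_div_add hr.ne' (by positivity)]
    ring
  refine ⟨fun x hx => ?_, by simp [hta, hv0], by simp [htb, hvπ]⟩
  have hmono := strictMono_neg_add_exp_mul_add (m := m) (x₀ := x₀) hr
  have htx : -m + exp (r₀ * (x + x₀)) ∈ Ioo 0 π :=
    ⟨hta ▸ hmono hx.1, htb ▸ hmono hx.2⟩
  rw [(hasDerivAt_liouvilleFlux hr.ne' hv hv' x).deriv]
  linear_combination r₀ * exp (r₀ * (x + x₀) / 2) * heq _ htx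
end

section
/- Let k > 0, m > 0, x₀ ∈ ℝ, λ ∈ ℝ, and let q₀ = (1+4k)/4, so that 1 + 4k = 4q₀. Set a = −x₀ + ln m and b = −x₀ + ln(π+m), and define t(x) = e^(x+x₀) − m. Suppose v : ℝ → ℝ is twice differentiable and satisfies −v''(t) + (k/(t+m)²)·v(t) = λ·v(t) for all t ∈ (0,π), with v(0) = 0 = v(π). Then u(x) = e^(−(x+x₀)/2)·v(t(x)) satisfies −u''(x) + q₀·u(x) = λ·e^(2(x+x₀))·u(x) for all x ∈ (a,b), and u(a) = 0 = u(b). -/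
/-!
With `τ = t + m = e^y` (`y = x + x₀`) and `u(y) = e^{-y/2} w(e^y)`, a direct computation gives
`u''(y) = e^{-y/2} (w(τ)/4 + τ² w''(τ))`, so the potential `k/τ²` becomes the constant `k + 1/4 = q₀`
and the spectral parameter picks up the weight `τ² = e^{2y}`. The endpoints `a`, `b` are mapped
to `t = 0` and `t = π`.
-/

open Real Set

namespace Liouville

/-- The substitution `τ = e^y`, `u = τ^{-1/2} w(τ)`. -/
noncomputable def transform (w : ℝ → ℝ) (y : ℝ) : ℝ := exp (-y / 2) * w (exp y)

theorem hasDerivAt_transform {w : ℝ → ℝ} {w' y : ℝ} (hw : HasDerivAt w w' (exp y)) :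
    HasDerivAt (transform w) (exp (-y / 2) * (-(1 / 2) * w (exp y) + exp y * w')) y := by
  have hexp : HasDerivAt (fun y : ℝ => exp (-y / 2)) (exp (-y / 2) * (-1 / 2)) y :=
    ((hasDerivAt_neg y).div_const 2).exp
  have hcomp : HasDerivAt (fun y => w (exp y)) (w' * exp y) y := hw.comp y (hasDerivAt_exp y)
  exact (hexp.mul hcomp).congr_deriv (by ring)

theorem deriv_transform {w : ℝ → ℝ} (hw : Differentiable ℝ w) :
    deriv (transform w) = transform fun τ => -(1 / 2) * w τ + τ * deriv w τ :=
  funext fun _ => (hasDerivAt_transform (hw _).hasDerivAt).deriv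

theorem deriv_deriv_transform {w : ℝ → ℝ} (hw : Differentiable ℝ w)
    (hw' : Differentiable ℝ (deriv w)) (y : ℝ) :
    deriv (deriv (transform w)) y =
      exp (-y / 2) * (w (exp y) / 4 + exp y ^ 2 * deriv (deriv w) (exp y)) := by
  have hW : HasDerivAt (fun τ => -(1 / 2) * w τ + τ * deriv w τ)
      (-(1 / 2) * deriv w (exp y) + (deriv w (exp y) + exp y * deriv (deriv w) (exp y)))
      (exp y) :=
    ((hw _).hasDerivAt.const_mul _).add
      ((hasDerivAt_id _).mul (hw' _).hasDerivAt |>.congr_deriv (by simp))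
  rw [deriv_transform hw, (hasDerivAt_transform hW).deriv]
  ring

theorem transform_eq_of_euler {w : ℝ → ℝ} (hw : Differentiable ℝ w)
    (hw' : Differentiable ℝ (deriv w)) {k lam y : ℝ}
    (heq : -deriv (deriv w) (exp y) + k / exp y ^ 2 * w (exp y) = lam * w (exp y)) :
    -deriv (deriv (transform w)) y + (k + 1 / 4) * transform w y =
      lam * exp (2 * y) * transform w y := by
  have hw'' : deriv (deriv w) (exp y) = k / exp y ^ 2 * w (exp y) - lam * w (exp y) := by
    linarith
  have hexp2 : exp (2 * y) = exp y ^ 2 := by rw [← exp_nat_mul]; norm_num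
  rw [deriv_deriv_transform hw hw', hw'', hexp2, transform]
  field_simp
  ring

end Liouville

theorem exp_sub_mem_Ioo_of_mem_Ioo_log {m L y : ℝ} (hm : 0 < m) (hLm : 0 < L + m)
    (hy : y ∈ Ioo (log m) (log (L + m))) : exp y - m ∈ Ioo 0 L := by
  have h₁ := exp_lt_exp.2 hy.1
  have h₂ := exp_lt_exp.2 hy.2
  rw [exp_log hm] at h₁
  rw [exp_log hLm] at h₂
  constructor <;> linarith

open Liouville in
theorem stmt12_general (k m x₀ lam q₀ : ℝ) (hm : 0 < m)
    (hq : q₀ = (1 + 4 * k) / 4)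
    (a b : ℝ)
    (ha : a = -x₀ + Real.log m) (hb : b = -x₀ + Real.log (Real.pi + m))
    (t : ℝ → ℝ) (htdef : ∀ x, t x = Real.exp (x + x₀) - m)
    (v : ℝ → ℝ)
    (hv : ∀ s, DifferentiableAt ℝ v s) (hv' : ∀ s, DifferentiableAt ℝ (deriv v) s)
    (heq : ∀ s ∈ Set.Ioo 0 Real.pi,
      -deriv (deriv v) s + (k / (s + m) ^ 2) * v s = lam * v s)
    (hv0 : v 0 = 0) (hvπ : v Real.pi = 0)
    (u : ℝ → ℝ) (hudef : ∀ x, u x = Real.exp (-(x + x₀) / 2) * v (t x)) :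
    (∀ x ∈ Set.Ioo a b,
      -deriv (deriv u) x + q₀ * u x = lam * Real.exp (2 * (x + x₀)) * u x) ∧
    u a = 0 ∧ u b = 0 := by
  set w : ℝ → ℝ := fun τ => v (τ - m)
  have hw : Differentiable ℝ w := fun τ => (hv _).comp τ (differentiableAt_id.sub_const m)
  have hderiv_w : deriv w = fun τ => deriv v (τ - m) := funext fun τ => deriv_comp_sub_const v m τ
  have hw' : Differentiable ℝ (deriv w) := fun τ => by
    rw [hderiv_w]; exact (hv' _).comp τ (differentiableAt_id.sub_const m)
  have hu : ∀ x, u x = transform w (x + x₀) := fun x => by simp [hudef, htdef, transform, w]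
  have hπm : 0 < π + m := by positivity
  refine ⟨fun x hx => ?_, ?_, ?_⟩
  · rw [ha, hb] at hx
    have hτ : exp (x + x₀) - m ∈ Ioo 0 π :=
      exp_sub_mem_Ioo_of_mem_Ioo_log hm hπm ⟨by linarith [hx.1], by linarith [hx.2]⟩
    have heuler : -deriv (deriv w) (exp (x + x₀)) + k / exp (x + x₀) ^ 2 * w (exp (x + x₀)) =
        lam * w (exp (x + x₀)) := by
      simpa [hderiv_w, deriv_comp_sub_const, w] using heq _ hτ
    have hduu : deriv (deriv u) x = deriv (deriv (transform w)) (x + x₀) := by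
      have hdu : deriv u = fun x => deriv (transform w) (x + x₀) :=
        funext fun x => by rw [funext hu, deriv_comp_add_const (transform w) x₀ x]
      rw [hdu, deriv_comp_add_const (deriv (transform w)) x₀ x]
    rw [hduu, hu, hq, show (1 + 4 * k) / 4 = k + 1 / 4 by ring]
    exact transform_eq_of_euler hw hw' heuler
  · simp [hu, ha, transform, exp_log hm, w, hv0]
  · simp [hu, hb, transform, exp_log hπm, w, hvπ]

/-- equal-roots case A1 (`1 + 4k = 4q₀`, solution `ω̄₁(τ) = √τ`):
the second PdHA problem transforms to `−u'' + q₀·u = λ·e^(2(x+x₀))·u`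
with Dirichlet boundary conditions. -/
theorem stmt12 (k m x₀ lam q₀ : ℝ) (hk : 0 < k) (hm : 0 < m)
    (hq : q₀ = (1 + 4 * k) / 4)
    (a b : ℝ)
    (ha : a = -x₀ + Real.log m) (hb : b = -x₀ + Real.log (Real.pi + m))
    (t : ℝ → ℝ) (htdef : ∀ x, t x = Real.exp (x + x₀) - m)
    (v : ℝ → ℝ)
    (hv : ∀ s, DifferentiableAt ℝ v s) (hv' : ∀ s, DifferentiableAt ℝ (deriv v) s)
    (heq : ∀ s ∈ Set.Ioo 0 Real.pi,
      -deriv (deriv v) s + (k / (s + m) ^ 2) * v s = lam * v s)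
    (hv0 : v 0 = 0) (hvπ : v Real.pi = 0)
    (u : ℝ → ℝ) (hudef : ∀ x, u x = Real.exp (-(x + x₀) / 2) * v (t x)) :
    (∀ x ∈ Set.Ioo a b,
      -deriv (deriv u) x + q₀ * u x = lam * Real.exp (2 * (x + x₀)) * u x) ∧
    u a = 0 ∧ u b = 0 :=
  stmt12_general k m x₀ lam q₀ hm hq a b ha hb t htdef v hv hv' heq hv0 hvπ u hudef
end

section
/- Let k > 0, m > 1, x₀ ∈ ℝ, λ ∈ ℝ, and let q₀ = (1+4k)/4. Set a = −x₀ + (ln m)³/3 and b = −x₀ + (ln(π+m))³/3, write c(x) = (3(x+x₀))^(1/3) (real cube root, which is positive on (a,b) since m > 1), and define t(x) = e^(c(x)) − m. Suppose v : ℝ → ℝ is twice differentiable and satisfies −v''(t) + (k/(t+m)²)·v(t) = λ·v(t) for all t ∈ (0,π), with v(0) = 0 = v(π). Then u(x) = c(x)^(−1)·e^(−c(x)/2)·v(t(x)) satisfies −(d/dx)(c(x)⁴·u'(x)) + q₀·u(x) = λ·e^(2c(x))·u(x) for all x ∈ (a,b), and u(a) = 0 = u(b). -/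
/-!
Write `s = c(x)`, so that `x = s³/3 - x₀` and `c' = c⁻²`, and put `τ = t + m = eˢ`. Then
`u = (z / s) ∘ c` with `z(s) = e^(-s/2) v(eˢ - m)`. The Euler substitution `τ = eˢ` turns the
equation for `v` into `-z'' + (k + 1/4) z = λ e^(2s) z`; dividing by `s` gives
`(s² (z/s)')' = s z''`; and because `c' = c⁻²`, `c⁴ (w ∘ c)' = (s² w') ∘ c`, so the operator
`-(c⁴ u')'` is `-z''/s` evaluated at `s = c(x)`. The endpoints `a`, `b` are where `t = 0, π`.
-/

open Real Filter Topology Set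

theorem rpow_one_div_three_pow_three {y : ℝ} (hy : 0 ≤ y) : (y ^ ((1 : ℝ) / 3)) ^ 3 = y := by
  simpa using rpow_inv_natCast_pow hy (n := 3) three_ne_zero

theorem pow_three_rpow_one_div_three {p : ℝ} (hp : 0 ≤ p) : (p ^ 3) ^ ((1 : ℝ) / 3) = p := by
  simpa using pow_rpow_inv_natCast hp (n := 3) three_ne_zero

theorem hasDerivAt_rpow_one_div_three {y : ℝ} (hy : 0 < y) :
    HasDerivAt (fun y : ℝ => y ^ ((1 : ℝ) / 3)) (((y ^ ((1 : ℝ) / 3)) ^ 2)⁻¹ / 3) y := by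
  refine (hasDerivAt_rpow_const (p := (1 : ℝ) / 3) (Or.inl hy.ne')).congr_deriv ?_
  rw [← rpow_natCast, ← rpow_mul hy.le, ← rpow_neg hy.le]
  norm_num
  ring

theorem hasDerivAt_cbrt_three_mul_add {x₀ x : ℝ} (hx : -x₀ < x) :
    HasDerivAt (fun x => (3 * (x + x₀)) ^ ((1 : ℝ) / 3))
      ((((3 * (x + x₀)) ^ ((1 : ℝ) / 3)) ^ 2)⁻¹) x := by
  have hlin : HasDerivAt (fun x : ℝ => 3 * (x + x₀)) 3 x := by
    simpa using ((hasDerivAt_id x).add_const x₀).const_mul 3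
  exact ((hasDerivAt_rpow_one_div_three (by linarith)).comp x hlin).congr_deriv (by ring)

theorem cbrt_three_mul_add_mem_Ioo {x₀ x p q : ℝ} (hp : 0 ≤ p)
    (hx : x ∈ Ioo (-x₀ + p ^ 3 / 3) (-x₀ + q ^ 3 / 3)) :
    (3 * (x + x₀)) ^ ((1 : ℝ) / 3) ∈ Ioo p q := by
  have hcube := rpow_one_div_three_pow_three (y := 3 * (x + x₀))
    (by nlinarith [hx.1, pow_nonneg hp 3])
  have hmono : StrictMono (fun y : ℝ => y ^ 3) := Odd.strictMono_pow (by decide)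
  constructor
  · rw [← hmono.lt_iff_lt, hcube]; linarith [hx.1]
  · rw [← hmono.lt_iff_lt, hcube]; linarith [hx.2]

theorem cbrt_three_mul_add_eq {x₀ p : ℝ} (hp : 0 ≤ p) :
    (3 * (-x₀ + p ^ 3 / 3 + x₀)) ^ ((1 : ℝ) / 3) = p := by
  rw [show 3 * (-x₀ + p ^ 3 / 3 + x₀) = p ^ 3 by ring, pow_three_rpow_one_div_three hp]

theorem hasDerivAt_pow_four_mul_deriv_comp {c W : ℝ → ℝ} {x g' : ℝ}
    (hc : ∀ᶠ y in 𝓝 x, HasDerivAt c ((c y ^ 2)⁻¹) y)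
    (hW : ∀ᶠ y in 𝓝 x, DifferentiableAt ℝ W (c y))
    (hg : HasDerivAt (fun s => s ^ 2 * deriv W s) g' (c x)) :
    HasDerivAt (fun y => c y ^ 4 * deriv (W ∘ c) y) (g' / c x ^ 2) x := by
  have heq : (fun y => c y ^ 4 * deriv (W ∘ c) y) =ᶠ[𝓝 x]
      (fun s => s ^ 2 * deriv W s) ∘ c := by
    filter_upwards [hc, hW] with y hcy hWy
    rw [(hWy.hasDerivAt.comp y hcy).deriv, Function.comp_apply]
    rcases eq_or_ne (c y) 0 with h | h
    · simp [h]
    · field_simp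
  simpa [div_eq_mul_inv] using (hg.comp x hc.self_of_nhds).congr_of_eventuallyEq heq

theorem hasDerivAt_sq_mul_deriv_div_self {z : ℝ → ℝ} {s z'' : ℝ} (hs : s ≠ 0)
    (hz : ∀ᶠ r in 𝓝 s, DifferentiableAt ℝ z r) (hz' : HasDerivAt (deriv z) z'' s) :
    HasDerivAt (fun r => r ^ 2 * deriv (fun r => z r / r) r) (s * z'') s := by
  have heq : (fun r => r ^ 2 * deriv (fun r => z r / r) r) =ᶠ[𝓝 s]
      fun r => r * deriv z r - z r := by
    filter_upwards [hz, eventually_ne_nhds hs] with r hzr hr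
    have hd : HasDerivAt (fun r => z r / r) ((deriv z r * r - z r * 1) / r ^ 2) r :=
      hzr.hasDerivAt.div (hasDerivAt_id' r) hr
    rw [hd.deriv]
    field_simp
  have h : HasDerivAt (fun r => r * deriv z r - z r) (1 * deriv z s + s * z'' - deriv z s) s :=
    ((hasDerivAt_id' s).mul hz').sub hz.self_of_nhds.hasDerivAt
  exact (h.congr_of_eventuallyEq heq).congr_deriv (by ring)

noncomputable def liouvilleExp (m : ℝ) (v : ℝ → ℝ) (s : ℝ) : ℝ :=
  exp (-s / 2) * v (exp s - m)

theorem hasDerivAt_liouvilleExp {v : ℝ → ℝ} (m s : ℝ) (hv : DifferentiableAt ℝ v (exp s - m)) :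
    HasDerivAt (liouvilleExp m v)
      (exp (-s / 2) * (exp s * deriv v (exp s - m) - v (exp s - m) / 2)) s := by
  have h : HasDerivAt (liouvilleExp m v) (exp (-s / 2) * (-1 / 2) * v (exp s - m) +
      exp (-s / 2) * (deriv v (exp s - m) * exp s)) s :=
    ((hasDerivAt_neg s).div_const 2).exp.mul
      (hv.hasDerivAt.comp s ((hasDerivAt_exp s).sub_const m))
  exact h.congr_deriv (by ring)

theorem deriv_liouvilleExp {v : ℝ → ℝ} (m : ℝ) (hv : Differentiable ℝ v) :
    deriv (liouvilleExp m v) =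
      fun s => exp (-s / 2) * (exp s * deriv v (exp s - m) - v (exp s - m) / 2) :=
  funext fun s => (hasDerivAt_liouvilleExp m s (hv _)).deriv

theorem hasDerivAt_deriv_liouvilleExp {v : ℝ → ℝ} (m s : ℝ) (hv : Differentiable ℝ v)
    (hv' : DifferentiableAt ℝ (deriv v) (exp s - m)) :
    HasDerivAt (deriv (liouvilleExp m v))
      (exp (-s / 2) * (exp s ^ 2 * deriv (deriv v) (exp s - m) + v (exp s - m) / 4)) s := by
  rw [deriv_liouvilleExp m hv]
  have hτ := (hasDerivAt_exp s).sub_const m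
  have hvτ : HasDerivAt (fun s => v (exp s - m)) (deriv v (exp s - m) * exp s) s :=
    (hv _).hasDerivAt.comp s hτ
  have hv'τ : HasDerivAt (fun s => deriv v (exp s - m))
      (deriv (deriv v) (exp s - m) * exp s) s :=
    hv'.hasDerivAt.comp (h := fun s => exp s - m) s hτ
  have h : HasDerivAt (fun s => exp (-s / 2) * (exp s * deriv v (exp s - m) - v (exp s - m) / 2))
      (exp (-s / 2) * (-1 / 2) * (exp s * deriv v (exp s - m) - v (exp s - m) / 2) +
        exp (-s / 2) * (exp s * deriv v (exp s - m) + exp s * (deriv (deriv v) (exp s - m) * exp s)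
          - deriv v (exp s - m) * exp s / 2)) s :=
    ((hasDerivAt_neg s).div_const 2).exp.mul
      (((hasDerivAt_exp s).mul hv'τ).sub (hvτ.div_const 2))
  exact h.congr_deriv (by ring)

theorem hasDerivAt_deriv_liouvilleExp_of_ode {v : ℝ → ℝ} {k lam : ℝ} (m s : ℝ)
    (hv : Differentiable ℝ v) (hv' : DifferentiableAt ℝ (deriv v) (exp s - m))
    (hode : -deriv (deriv v) (exp s - m) + k / (exp s - m + m) ^ 2 * v (exp s - m) =
      lam * v (exp s - m)) :
    HasDerivAt (deriv (liouvilleExp m v))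
      ((k + 1 / 4 - lam * exp (2 * s)) * liouvilleExp m v s) s := by
  convert hasDerivAt_deriv_liouvilleExp m s hv hv' using 1
  rw [sub_add_cancel] at hode
  have hE : exp s ≠ 0 := exp_ne_zero s
  rw [liouvilleExp, show deriv (deriv v) (exp s - m) =
    k / exp s ^ 2 * v (exp s - m) - lam * v (exp s - m) by linarith,
    show exp (2 * s) = exp s ^ 2 by rw [← exp_nat_mul]; norm_num]
  field_simp
  ring

theorem stmt13_general (k m x₀ lam q₀ : ℝ) (hm : 1 < m)
    (hq : q₀ = (1 + 4 * k) / 4)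
    (a b : ℝ)
    (ha : a = -x₀ + (Real.log m) ^ 3 / 3)
    (hb : b = -x₀ + (Real.log (Real.pi + m)) ^ 3 / 3)
    (c : ℝ → ℝ) (hcdef : ∀ x, c x = (3 * (x + x₀)) ^ ((1 : ℝ) / 3))
    (t : ℝ → ℝ) (htdef : ∀ x, t x = Real.exp (c x) - m)
    (v : ℝ → ℝ)
    (hv : ∀ s, DifferentiableAt ℝ v s) (hv' : ∀ s, DifferentiableAt ℝ (deriv v) s)
    (heq : ∀ s ∈ Set.Ioo 0 Real.pi,
      -deriv (deriv v) s + (k / (s + m) ^ 2) * v s = lam * v s)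
    (hv0 : v 0 = 0) (hvπ : v Real.pi = 0)
    (u : ℝ → ℝ)
    (hudef : ∀ x, u x = (c x)⁻¹ * Real.exp (-c x / 2) * v (t x)) :
    (∀ x ∈ Set.Ioo a b, 0 < c x) ∧
    (∀ x ∈ Set.Ioo a b,
      -deriv (fun z => c z ^ 4 * deriv u z) x + q₀ * u x
        = lam * Real.exp (2 * c x) * u x) ∧
    u a = 0 ∧ u b = 0 := by
  subst ha hb hq
  have hm0 : 0 < m := by linarith
  have hlog : 0 < log m := log_pos hm
  have hc_fun : c = fun x => (3 * (x + x₀)) ^ ((1 : ℝ) / 3) := funext hcdef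
  have hcI : ∀ x ∈ Ioo (-x₀ + log m ^ 3 / 3) (-x₀ + log (π + m) ^ 3 / 3),
      c x ∈ Ioo (log m) (log (π + m)) := fun x hx =>
    hcdef x ▸ cbrt_three_mul_add_mem_Ioo hlog.le hx
  have hu : u = (fun s => liouvilleExp m v s / s) ∘ c :=
    funext fun x => by rw [hudef, htdef, Function.comp_apply, liouvilleExp]; ring
  refine ⟨fun x hx => hlog.trans (hcI x hx).1, fun x hx => ?_, ?_, ?_⟩
  · have hs := hcI x hx
    have hs0 : 0 < c x := hlog.trans hs.1
    have hτ : exp (c x) - m ∈ Ioo 0 π := by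
      have h₁ := exp_lt_exp.2 hs.1
      have h₂ := exp_lt_exp.2 hs.2
      rw [exp_log hm0] at h₁
      rw [exp_log (by positivity)] at h₂
      constructor <;> linarith
    have hz'' := hasDerivAt_deriv_liouvilleExp_of_ode m (c x) hv (hv' _) (heq _ hτ)
    have hg := hasDerivAt_sq_mul_deriv_div_self hs0.ne'
      (Eventually.of_forall fun r => (hasDerivAt_liouvilleExp m r (hv _)).differentiableAt) hz''
    have hx₀ : ∀ᶠ y in 𝓝 x, -x₀ < y := Ioi_mem_nhds (by linarith [hx.1, pow_pos hlog 3])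
    have hc : ∀ᶠ y in 𝓝 x, HasDerivAt c ((c y ^ 2)⁻¹) y := by
      filter_upwards [hx₀] with y hy
      rw [hc_fun]
      exact hasDerivAt_cbrt_three_mul_add hy
    have hW : ∀ᶠ y in 𝓝 x, DifferentiableAt ℝ (fun s => liouvilleExp m v s / s) (c y) := by
      filter_upwards [hx₀] with y hy
      exact (hasDerivAt_liouvilleExp m _ (hv _)).differentiableAt.div differentiableAt_id
        (hcdef y ▸ rpow_pos_of_pos (by linarith) _).ne'
    rw [hu, (hasDerivAt_pow_four_mul_deriv_comp hc hW hg).deriv, Function.comp_apply]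
    field_simp
    ring
  · rw [hudef, htdef, hcdef, cbrt_three_mul_add_eq hlog.le, exp_log hm0, sub_self, hv0, mul_zero]
  · have hlogπ : 0 ≤ log (π + m) := log_nonneg (by linarith [pi_pos])
    rw [hudef, htdef, hcdef, cbrt_three_mul_add_eq hlogπ, exp_log (by positivity),
      add_sub_cancel_right, hvπ, mul_zero]

/-- equal-roots case A2 (`1 + 4k = 4q₀`, solution
`ω̄₂(τ) = √τ·ln τ`): the second PdHA problem transforms to
`−(c(x)⁴·u')' + q₀·u = λ·e^(2c(x))·u` where `c(x) = (3(x+x₀))^(1/3)`,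
with Dirichlet boundary conditions. -/
theorem stmt13 (k m x₀ lam q₀ : ℝ) (hk : 0 < k) (hm : 1 < m)
    (hq : q₀ = (1 + 4 * k) / 4)
    (a b : ℝ)
    (ha : a = -x₀ + (Real.log m) ^ 3 / 3)
    (hb : b = -x₀ + (Real.log (Real.pi + m)) ^ 3 / 3)
    (c : ℝ → ℝ) (hcdef : ∀ x, c x = (3 * (x + x₀)) ^ ((1 : ℝ) / 3))
    (t : ℝ → ℝ) (htdef : ∀ x, t x = Real.exp (c x) - m)
    (v : ℝ → ℝ)
    (hv : ∀ s, DifferentiableAt ℝ v s) (hv' : ∀ s, DifferentiableAt ℝ (deriv v) s)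
    (heq : ∀ s ∈ Set.Ioo 0 Real.pi,
      -deriv (deriv v) s + (k / (s + m) ^ 2) * v s = lam * v s)
    (hv0 : v 0 = 0) (hvπ : v Real.pi = 0)
    (u : ℝ → ℝ)
    (hudef : ∀ x, u x = (c x)⁻¹ * Real.exp (-c x / 2) * v (t x)) :
    (∀ x ∈ Set.Ioo a b, 0 < c x) ∧
    (∀ x ∈ Set.Ioo a b,
      -deriv (fun z => c z ^ 4 * deriv u z) x + q₀ * u x
        = lam * Real.exp (2 * c x) * u x) ∧
    u a = 0 ∧ u b = 0 :=
  stmt13_general k m x₀ lam q₀ hm hq a b ha hb c hcdef t htdef v hv hv' heq hv0 hvπ u hudef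
end

section
/- Let k > 0, m > 0, x₀ ∈ ℝ, λ ∈ ℝ, q₀ ∈ ℝ with 1 + 4k > 4q₀, and let ρ be a real root of ρ² − ρ − (k − q₀) = 0 (so ρ = (1 ± √(1+4(k−q₀)))/2 and 2ρ − 1 = ±√(1+4(k−q₀)) ≠ 0). Set a = −x₀ + m^(2ρ−1)/(2ρ−1) and b = −x₀ + (π+m)^(2ρ−1)/(2ρ−1), and note (2ρ−1)(x+x₀) > 0 for x ∈ (a,b). Define t(x) = −m + ((2ρ−1)(x+x₀))^(1/(2ρ−1)). Suppose v : ℝ → ℝ is twice differentiable and satisfies −v''(t) + (k/(t+m)²)·v(t) = λ·v(t) for all t ∈ (0,π), with v(0) = 0 = v(π). Then u(x) = ((2ρ−1)(x+x₀))^(−ρ/(2ρ−1))·v(t(x)) satisfies −(d/dx)((2ρ−1)²(x+x₀)²·u'(x)) + q₀·u(x) = λ·((2ρ−1)(x+x₀))^(2/(2ρ−1))·u(x) for all x ∈ (a,b), and u(a) = 0 = u(b). -/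
/-!
Write `c = 2ρ - 1`, `w = c (x + x₀)` and `σ = w ^ (1/c) = t + m`, so that `σ ^ c = w`,
`dσ/dx = σ / w` and `u = σ ^ (-ρ) · V(σ)` with `V(s) = v(s - m)`. Because `c + 1 = 2ρ`, the weighted
derivative `w² u'` equals `G(σ)` with `G(s) = s ^ (2ρ) · (s ^ (-ρ) V)'`, and the Euler-type identity
`G'(s) = s ^ ρ (V'' - ρ(ρ - 1) V / s²)` turns `-(w² u')' + q₀ u` into `σ ^ (-ρ) (-σ² V'' + k V)`,
since `ρ(ρ - 1) + q₀ = k`. The equation for `v` at `t = σ - m` finishes the computation. The map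
`x ↦ σ` is strictly increasing and sends `a, b` to `m, π + m`.
-/

open Real Set Filter Topology

section EulerOperator

variable {ρ s : ℝ} {V : ℝ → ℝ}

theorem hasDerivAt_rpow_const_of_pos (hs : 0 < s) :
    HasDerivAt (fun r => r ^ ρ) (ρ * s ^ ρ / s) s := by
  simpa only [rpow_sub_one hs.ne', mul_div_assoc] using
    hasDerivAt_rpow_const (p := ρ) (Or.inl hs.ne')

theorem hasDerivAt_inv_rpow_mul {V' : ℝ} (hs : 0 < s) (hV : HasDerivAt V V' s) :
    HasDerivAt (fun r => (r ^ ρ)⁻¹ * V r) ((s ^ ρ)⁻¹ * (V' - ρ * V s / s)) s := by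
  have hpow := hasDerivAt_rpow_const_of_pos (ρ := ρ) hs
  have hP : s ^ ρ ≠ 0 := (rpow_pos_of_pos hs ρ).ne'
  refine ((hpow.inv hP).mul hV).congr_deriv ?_
  simp only [Pi.inv_apply]
  field_simp
  ring

theorem rpow_sq_mul_deriv_inv_rpow_mul (hV : DifferentiableAt ℝ V s) (hs : 0 < s) :
    (s ^ ρ) ^ 2 * deriv (fun r => (r ^ ρ)⁻¹ * V r) s = s ^ ρ * (deriv V s - ρ * V s / s) := by
  have hP : s ^ ρ ≠ 0 := (rpow_pos_of_pos hs ρ).ne'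
  rw [(hasDerivAt_inv_rpow_mul hs hV.hasDerivAt).deriv]
  field_simp

theorem hasDerivAt_rpow_sq_mul_deriv_inv_rpow_mul (hV : ∀ r, DifferentiableAt ℝ V r)
    (hV' : DifferentiableAt ℝ (deriv V) s) (hs : 0 < s) :
    HasDerivAt (fun r => (r ^ ρ) ^ 2 * deriv (fun r => (r ^ ρ)⁻¹ * V r) r)
      (s ^ ρ * (deriv (deriv V) s - ρ * (ρ - 1) * V s / s ^ 2)) s := by
  have hpow := hasDerivAt_rpow_const_of_pos (ρ := ρ) hs
  have hbracket : HasDerivAt (fun r => deriv V r - ρ * (V r / r))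
      (deriv (deriv V) s - ρ * ((deriv V s * s - V s * 1) / s ^ 2)) s :=
    hV'.hasDerivAt.sub (((hV s).hasDerivAt.div (hasDerivAt_id' s) hs.ne').const_mul ρ)
  have hnear : (fun r => (r ^ ρ) ^ 2 * deriv (fun r => (r ^ ρ)⁻¹ * V r) r)
      =ᶠ[𝓝 s] fun r => r ^ ρ * (deriv V r - ρ * (V r / r)) := by
    filter_upwards [Ioi_mem_nhds hs] with r hr
    rw [rpow_sq_mul_deriv_inv_rpow_mul (hV r) hr, mul_div_assoc]
  refine ((hpow.mul hbracket).congr_of_eventuallyEq hnear).congr_deriv ?_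
  field_simp
  ring

end EulerOperator

section AffineRpow

variable {c x₀ : ℝ}

theorem mul_add_eq_rpow_of_eq_neg_add_rpow_div {x p : ℝ} (hc : c ≠ 0)
    (hx : x = -x₀ + p ^ c / c) : c * (x + x₀) = p ^ c := by
  rw [hx]
  field_simp
  ring

theorem rpow_one_div_eq_of_eq_neg_add_rpow_div {x p : ℝ} (hc : c ≠ 0) (hp : 0 ≤ p)
    (hx : x = -x₀ + p ^ c / c) : (c * (x + x₀)) ^ (1 / c) = p := by
  rw [mul_add_eq_rpow_of_eq_neg_add_rpow_div hc hx, one_div, rpow_rpow_inv hp hc]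

theorem rpow_one_div_rpow_sq {ρ w : ℝ} (hc : 2 * ρ - 1 ≠ 0) (hw : 0 < w) :
    ((w ^ (1 / (2 * ρ - 1))) ^ ρ) ^ 2 = w * w ^ (1 / (2 * ρ - 1)) := by
  have hσ : 0 < w ^ (1 / (2 * ρ - 1)) := rpow_pos_of_pos hw _
  rw [← rpow_mul_natCast hσ.le, show ρ * ((2 : ℕ) : ℝ) = (2 * ρ - 1) + 1 by push_cast; ring,
    rpow_add_one hσ.ne', one_div, rpow_inv_rpow hw.le hc]

theorem hasDerivAt_affine_rpow_one_div {x : ℝ} (hc : c ≠ 0) (hx : 0 < c * (x + x₀)) :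
    HasDerivAt (fun z => (c * (z + x₀)) ^ (1 / c))
      ((c * (x + x₀)) ^ (1 / c) / (c * (x + x₀))) x := by
  have hw : HasDerivAt (fun z => c * (z + x₀)) c x := by
    simpa using ((hasDerivAt_id x).add_const x₀).const_mul c
  convert hw.rpow_const (p := 1 / c) (Or.inl hx.ne') using 1
  rw [rpow_sub_one hx.ne']
  field_simp

theorem strictMonoOn_affine_rpow_one_div (hc : c ≠ 0) :
    StrictMonoOn (fun z => (c * (z + x₀)) ^ (1 / c)) {z | 0 < c * (z + x₀)} := by
  intro y hy z hz hyz
  rcases hc.lt_or_gt with hneg | hpos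
  · exact rpow_lt_rpow_of_neg hz (by nlinarith) (one_div_neg.2 hneg)
  · exact rpow_lt_rpow hy.le (by nlinarith) (one_div_pos.2 hpos)

theorem pos_and_rpow_one_div_mem_Ioo {p q a b x : ℝ} (hc : c ≠ 0) (hp : 0 < p) (hq : 0 < q)
    (ha : a = -x₀ + p ^ c / c) (hb : b = -x₀ + q ^ c / c) (hx : x ∈ Ioo a b) :
    0 < c * (x + x₀) ∧ (c * (x + x₀)) ^ (1 / c) ∈ Ioo p q := by
  have hwa : 0 < c * (a + x₀) :=
    mul_add_eq_rpow_of_eq_neg_add_rpow_div hc ha ▸ rpow_pos_of_pos hp c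
  have hwb : 0 < c * (b + x₀) :=
    mul_add_eq_rpow_of_eq_neg_add_rpow_div hc hb ▸ rpow_pos_of_pos hq c
  have hw : 0 < c * (x + x₀) := by nlinarith [hx.1, hx.2]
  have hmono := strictMonoOn_affine_rpow_one_div (x₀ := x₀) hc
  refine ⟨hw, ?_, ?_⟩
  · simpa only [rpow_one_div_eq_of_eq_neg_add_rpow_div hc hp.le ha] using
      hmono hwa hw hx.1
  · simpa only [rpow_one_div_eq_of_eq_neg_add_rpow_div hc hq.le hb] using
      hmono hw hwb hx.2

end AffineRpow

section Transformation

variable {ρ x₀ : ℝ} {V u : ℝ → ℝ}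

theorem sq_mul_deriv_eq_of_eq_inv_rpow_mul (hc : 2 * ρ - 1 ≠ 0) (hV : ∀ r, DifferentiableAt ℝ V r)
    (hu : ∀ z, 0 < (2 * ρ - 1) * (z + x₀) →
      u z = ((((2 * ρ - 1) * (z + x₀)) ^ (1 / (2 * ρ - 1))) ^ ρ)⁻¹ *
        V (((2 * ρ - 1) * (z + x₀)) ^ (1 / (2 * ρ - 1))))
    {z : ℝ} (hz : 0 < (2 * ρ - 1) * (z + x₀)) :
    (2 * ρ - 1) ^ 2 * (z + x₀) ^ 2 * deriv u z =
      ((((2 * ρ - 1) * (z + x₀)) ^ (1 / (2 * ρ - 1))) ^ ρ) ^ 2 *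
        deriv (fun r => (r ^ ρ)⁻¹ * V r) (((2 * ρ - 1) * (z + x₀)) ^ (1 / (2 * ρ - 1))) := by
  set w := (2 * ρ - 1) * (z + x₀)
  set σ := w ^ (1 / (2 * ρ - 1))
  have hσ : 0 < σ := rpow_pos_of_pos hz _
  have hopen : IsOpen {y : ℝ | 0 < (2 * ρ - 1) * (y + x₀)} := isOpen_lt (by fun_prop) (by fun_prop)
  have hu_near : u =ᶠ[𝓝 z] (fun r => (r ^ ρ)⁻¹ * V r) ∘
      fun y => ((2 * ρ - 1) * (y + x₀)) ^ (1 / (2 * ρ - 1)) :=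
    eventually_of_mem (hopen.mem_nhds hz) fun y hy => hu y hy
  have hU := hasDerivAt_inv_rpow_mul (ρ := ρ) hσ (hV σ).hasDerivAt
  rw [hu_near.deriv_eq, (hU.comp z (hasDerivAt_affine_rpow_one_div hc hz)).deriv, ← hU.deriv,
    show (σ ^ ρ) ^ 2 = w * σ from rpow_one_div_rpow_sq hc hz]
  field_simp
  ring

theorem neg_deriv_sq_mul_deriv_add_mul_eq (q₀ : ℝ) (hc : 2 * ρ - 1 ≠ 0)
    (hV : ∀ r, DifferentiableAt ℝ V r) (hV' : ∀ r, DifferentiableAt ℝ (deriv V) r)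
    (hu : ∀ z, 0 < (2 * ρ - 1) * (z + x₀) →
      u z = ((((2 * ρ - 1) * (z + x₀)) ^ (1 / (2 * ρ - 1))) ^ ρ)⁻¹ *
        V (((2 * ρ - 1) * (z + x₀)) ^ (1 / (2 * ρ - 1))))
    {x : ℝ} (hx : 0 < (2 * ρ - 1) * (x + x₀)) :
    -deriv (fun z => (2 * ρ - 1) ^ 2 * (z + x₀) ^ 2 * deriv u z) x + q₀ * u x =
      ((((2 * ρ - 1) * (x + x₀)) ^ (1 / (2 * ρ - 1))) ^ ρ)⁻¹ *
        (-(((2 * ρ - 1) * (x + x₀)) ^ (1 / (2 * ρ - 1))) ^ 2 *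
            deriv (deriv V) (((2 * ρ - 1) * (x + x₀)) ^ (1 / (2 * ρ - 1))) +
          (ρ * (ρ - 1) + q₀) * V (((2 * ρ - 1) * (x + x₀)) ^ (1 / (2 * ρ - 1)))) := by
  have hnear : (fun z => (2 * ρ - 1) ^ 2 * (z + x₀) ^ 2 * deriv u z) =ᶠ[𝓝 x]
      (fun r => (r ^ ρ) ^ 2 * deriv (fun r => (r ^ ρ)⁻¹ * V r) r) ∘
        fun z => ((2 * ρ - 1) * (z + x₀)) ^ (1 / (2 * ρ - 1)) := by
    have hopen : IsOpen {z : ℝ | 0 < (2 * ρ - 1) * (z + x₀)} :=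
      isOpen_lt (by fun_prop) (by fun_prop)
    filter_upwards [hopen.mem_nhds hx] with z hz
    exact sq_mul_deriv_eq_of_eq_inv_rpow_mul hc hV hu hz
  have hσ : 0 < ((2 * ρ - 1) * (x + x₀)) ^ (1 / (2 * ρ - 1)) := rpow_pos_of_pos hx _
  have hG := (hasDerivAt_rpow_sq_mul_deriv_inv_rpow_mul (ρ := ρ) hV (hV' _) hσ).comp x
    (hasDerivAt_affine_rpow_one_div hc hx)
  rw [(hG.congr_of_eventuallyEq hnear).deriv, hu x hx]
  have hσw := rpow_one_div_rpow_sq hc hx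
  generalize ((2 * ρ - 1) * (x + x₀)) ^ (1 / (2 * ρ - 1)) = σ at hσ hσw ⊢
  generalize (2 * ρ - 1) * (x + x₀) = w at hx hσw ⊢
  have hP : 0 < σ ^ ρ := rpow_pos_of_pos hσ ρ
  rw [show σ / w = σ ^ 2 / (σ ^ ρ) ^ 2 by rw [hσw]; field_simp]
  field_simp
  ring

end Transformation

theorem stmt14_general (k m x₀ lam q₀ ρ : ℝ) (hm : 0 < m)
    (hkq : 1 + 4 * k > 4 * q₀) (hρ : ρ ^ 2 - ρ - (k - q₀) = 0)
    (a b : ℝ)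
    (ha : a = -x₀ + m ^ (2 * ρ - 1) / (2 * ρ - 1))
    (hb : b = -x₀ + (Real.pi + m) ^ (2 * ρ - 1) / (2 * ρ - 1))
    (t : ℝ → ℝ)
    (htdef : ∀ x, t x = -m + ((2 * ρ - 1) * (x + x₀)) ^ (1 / (2 * ρ - 1)))
    (v : ℝ → ℝ)
    (hv : ∀ s, DifferentiableAt ℝ v s) (hv' : ∀ s, DifferentiableAt ℝ (deriv v) s)
    (heq : ∀ s ∈ Set.Ioo 0 Real.pi,
      -deriv (deriv v) s + (k / (s + m) ^ 2) * v s = lam * v s)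
    (hv0 : v 0 = 0) (hvπ : v Real.pi = 0)
    (u : ℝ → ℝ)
    (hudef : ∀ x, u x =
      ((2 * ρ - 1) * (x + x₀)) ^ (-ρ / (2 * ρ - 1)) * v (t x)) :
    2 * ρ - 1 ≠ 0 ∧
    (∀ x ∈ Set.Ioo a b, 0 < (2 * ρ - 1) * (x + x₀)) ∧
    (∀ x ∈ Set.Ioo a b,
      -deriv (fun z => (2 * ρ - 1) ^ 2 * (z + x₀) ^ 2 * deriv u z) x + q₀ * u x
        = lam * ((2 * ρ - 1) * (x + x₀)) ^ (2 / (2 * ρ - 1)) * u x) ∧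
    u a = 0 ∧ u b = 0 := by
  have hc : 2 * ρ - 1 ≠ 0 := fun h => by nlinarith
  set V := fun r => v (r - m) with hV_def
  have hVd : ∀ r, DifferentiableAt ℝ V r := fun r => differentiableAt_comp_sub_const.2 (hv _)
  have hdV : deriv V = fun r => deriv v (r - m) := funext fun r => deriv_comp_sub_const v m r
  have hV'd : ∀ r, DifferentiableAt ℝ (deriv V) r :=
    fun r => hdV ▸ differentiableAt_comp_sub_const.2 (hv' _)
  have ht : ∀ x, t x = ((2 * ρ - 1) * (x + x₀)) ^ (1 / (2 * ρ - 1)) - m :=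
    fun x => by rw [htdef]; ring
  have hu : ∀ z, 0 < (2 * ρ - 1) * (z + x₀) →
      u z = ((((2 * ρ - 1) * (z + x₀)) ^ (1 / (2 * ρ - 1))) ^ ρ)⁻¹ *
        V (((2 * ρ - 1) * (z + x₀)) ^ (1 / (2 * ρ - 1))) := fun z hz => by
    rw [hudef, ht, neg_div, rpow_neg hz.le, ← rpow_mul hz.le, one_div_mul_eq_div]
  have hrange := fun x (hx : x ∈ Ioo a b) =>
    pos_and_rpow_one_div_mem_Ioo hc hm (by positivity) ha hb hx
  refine ⟨hc, fun x hx => (hrange x hx).1, fun x hx => ?_, ?_, ?_⟩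
  · obtain ⟨hw, hσm, hσπ⟩ := hrange x hx
    have hode := heq _ ⟨sub_pos.2 hσm, sub_lt_iff_lt_add.2 hσπ⟩
    rw [sub_add_cancel] at hode
    have hσ2 : ((2 * ρ - 1) * (x + x₀)) ^ (2 / (2 * ρ - 1)) =
        (((2 * ρ - 1) * (x + x₀)) ^ (1 / (2 * ρ - 1))) ^ 2 := by
      rw [← rpow_mul_natCast hw.le]
      ring_nf
    rw [neg_deriv_sq_mul_deriv_add_mul_eq q₀ hc hVd hV'd hu hw, hu x hw, hσ2, hdV,
      deriv_comp_sub_const]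
    set σ := ((2 * ρ - 1) * (x + x₀)) ^ (1 / (2 * ρ - 1))
    have hσ : σ ≠ 0 := (hm.trans hσm).ne'
    field_simp at hode
    linear_combination (σ ^ ρ)⁻¹ * (hode + V σ * hρ)
  · rw [hudef, ht, rpow_one_div_eq_of_eq_neg_add_rpow_div hc hm.le ha, sub_self, hv0, mul_zero]
  · rw [hudef, ht, rpow_one_div_eq_of_eq_neg_add_rpow_div hc (by positivity) hb,
      add_sub_cancel_right, hvπ, mul_zero]

/-- distinct-real-roots case B (`1 + 4k > 4q₀`): the second PdHA
problem transforms to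
`−((2ρ−1)²(x+x₀)²·u')' + q₀·u = λ·((2ρ−1)(x+x₀))^(2/(2ρ−1))·u`
with Dirichlet boundary conditions, `ρ` a real root of `ρ² − ρ − (k−q₀) = 0`. -/
theorem stmt14 (k m x₀ lam q₀ ρ : ℝ) (hk : 0 < k) (hm : 0 < m)
    (hkq : 1 + 4 * k > 4 * q₀) (hρ : ρ ^ 2 - ρ - (k - q₀) = 0)
    (a b : ℝ)
    (ha : a = -x₀ + m ^ (2 * ρ - 1) / (2 * ρ - 1))
    (hb : b = -x₀ + (Real.pi + m) ^ (2 * ρ - 1) / (2 * ρ - 1))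
    (t : ℝ → ℝ)
    (htdef : ∀ x, t x = -m + ((2 * ρ - 1) * (x + x₀)) ^ (1 / (2 * ρ - 1)))
    (v : ℝ → ℝ)
    (hv : ∀ s, DifferentiableAt ℝ v s) (hv' : ∀ s, DifferentiableAt ℝ (deriv v) s)
    (heq : ∀ s ∈ Set.Ioo 0 Real.pi,
      -deriv (deriv v) s + (k / (s + m) ^ 2) * v s = lam * v s)
    (hv0 : v 0 = 0) (hvπ : v Real.pi = 0)
    (u : ℝ → ℝ)
    (hudef : ∀ x, u x =
      ((2 * ρ - 1) * (x + x₀)) ^ (-ρ / (2 * ρ - 1)) * v (t x)) :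
    2 * ρ - 1 ≠ 0 ∧
    (∀ x ∈ Set.Ioo a b, 0 < (2 * ρ - 1) * (x + x₀)) ∧
    (∀ x ∈ Set.Ioo a b,
      -deriv (fun z => (2 * ρ - 1) ^ 2 * (z + x₀) ^ 2 * deriv u z) x + q₀ * u x
        = lam * ((2 * ρ - 1) * (x + x₀)) ^ (2 / (2 * ρ - 1)) * u x) ∧
    u a = 0 ∧ u b = 0 :=
  stmt14_general k m x₀ lam q₀ ρ hm hkq hρ a b ha hb t htdef v hv hv' heq hv0 hvπ u hudef
end

section
/- Let C₁ > 0, k > 0, m > 0, x₀ ∈ ℝ, λ ∈ ℝ. Set a = −x₀ + 2√(m/C₁) and b = −x₀ + 2√((π+m)/C₁), and define t(x) = C₁(x+x₀)²/4 − m. Suppose v : ℝ → ℝ is twice differentiable and satisfies −v''(t) + (k/(t+m)²)·v(t) = λ·v(t) for all t ∈ (0,π), with v(0) = 0 = v(π). Then u(x) = (C₁(x+x₀)/2)^(−2)·v(t(x)) satisfies −(d/dx)((1/8)·C₁³·(x+x₀)³·u'(x)) + (k/2)·C₁³·(x+x₀)·u(x) = λ·(C₁(x+x₀)/2)⁵·u(x)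 for all x ∈ (a,b), and u(a) = 0 = u(b). -/
/-!
With `ρ = t' = C₁ (x + x₀) / 2` we have `p = ρ³` and `u = ρ⁻² · (v ∘ t)`, so
`ρ³ u' = ρ² · (v' ∘ t) - 2 ρ' · (v ∘ t)`. Since `ρ` is affine, differentiating once more the
first-order terms cancel and `(ρ³ u')' = ρ³ · (v'' ∘ t)`; the equation for `v` at `t x`, together
with `t + m = ρ² / C₁`, then gives the equation for `u`. The map `t` increases on `x ≥ -x₀` with
`t a = 0` and `t b = π`, which carries the interval and the boundary conditions across.
-/

open Set

section ChangeOfVariable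

variable {t ρ v : ℝ → ℝ} {r x : ℝ}

lemma hasDerivAt_zpow_neg_two_mul_comp (ht : HasDerivAt t (ρ x) x) (hρ : HasDerivAt ρ r x)
    (hv : DifferentiableAt ℝ v (t x)) (hx : ρ x ≠ 0) :
    HasDerivAt (fun z => ρ z ^ (-2 : ℤ) * v (t z))
      ((ρ x ^ 2 * deriv v (t x) - 2 * r * v (t x)) / ρ x ^ 3) x := by
  have h := ((hρ.pow 2).inv (pow_ne_zero 2 hx)).mul (hv.hasDerivAt.comp x ht)
  simp only [zpow_neg, zpow_ofNat]
  refine h.congr_deriv ?_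
  simp only [Pi.pow_apply, Pi.inv_apply, Function.comp_apply, Nat.cast_ofNat]
  field_simp
  ring

lemma hasDerivAt_sq_mul_deriv_comp_sub (ht : HasDerivAt t (ρ x) x) (hρ : HasDerivAt ρ r x)
    (hv : DifferentiableAt ℝ v (t x)) (hv' : DifferentiableAt ℝ (deriv v) (t x)) :
    HasDerivAt (fun z => ρ z ^ 2 * deriv v (t z) - 2 * r * v (t z))
      (ρ x ^ 3 * deriv (deriv v) (t x)) x := by
  have h := ((hρ.pow 2).mul (hv'.hasDerivAt.comp x ht)).sub
    ((hv.hasDerivAt.comp x ht).const_mul (2 * r))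
  refine h.congr_deriv ?_
  simp only [Pi.pow_apply, Function.comp_apply, Nat.cast_ofNat]
  ring

lemma deriv_cube_mul_deriv_zpow_neg_two_mul_comp (ht : ∀ z, HasDerivAt t (ρ z) z)
    (hρ : ∀ z, HasDerivAt ρ r z) (hv : Differentiable ℝ v) (hv' : Differentiable ℝ (deriv v))
    (hx : ρ x ≠ 0) :
    deriv (fun z => ρ z ^ 3 * deriv (fun z => ρ z ^ (-2 : ℤ) * v (t z)) z) x
      = ρ x ^ 3 * deriv (deriv v) (t x) := by
  have hflux : (fun z => ρ z ^ 3 * deriv (fun z => ρ z ^ (-2 : ℤ) * v (t z)) z)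
      =ᶠ[nhds x] fun z => ρ z ^ 2 * deriv v (t z) - 2 * r * v (t z) := by
    filter_upwards [(hρ x).continuousAt.eventually_ne hx] with z hz
    rw [(hasDerivAt_zpow_neg_two_mul_comp (ht z) (hρ z) (hv _) hz).deriv]
    field_simp
  rw [hflux.deriv_eq, (hasDerivAt_sq_mul_deriv_comp_sub (ht x) (hρ x) (hv _) (hv' _)).deriv]

end ChangeOfVariable

lemma mul_two_mul_sqrt_div_sq_div_four {c s : ℝ} (hc : 0 < c) (hs : 0 ≤ s) :
    c * (2 * √(s / c)) ^ 2 / 4 = s := by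
  rw [mul_pow, Real.sq_sqrt (div_nonneg hs hc.le)]
  field_simp
  ring

lemma hasDerivAt_mul_add_sq_div_four_sub (c x₀ m x : ℝ) :
    HasDerivAt (fun z => c * (z + x₀) ^ 2 / 4 - m) (c * (x + x₀) / 2) x := by
  refine ((((hasDerivAt_id x).add_const x₀).pow 2).const_mul c).div_const 4 |>.sub_const m
    |>.congr_deriv ?_
  simp only [id_eq, Nat.cast_ofNat]
  ring

lemma mul_add_sq_div_four_mem_Ioo {c p q x₀ x : ℝ} (hc : 0 < c) (hp : 0 ≤ p) (hq : 0 ≤ q)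
    (hx : x ∈ Ioo (-x₀ + 2 * √(p / c)) (-x₀ + 2 * √(q / c))) :
    c * (x + x₀) ^ 2 / 4 ∈ Ioo p q := by
  have hlo : 2 * √(p / c) < x + x₀ := by linarith [hx.1]
  have hhi : x + x₀ < 2 * √(q / c) := by linarith [hx.2]
  constructor
  · calc p = c * (2 * √(p / c)) ^ 2 / 4 := (mul_two_mul_sqrt_div_sq_div_four hc hp).symm
      _ < c * (x + x₀) ^ 2 / 4 := by gcongr
  · calc c * (x + x₀) ^ 2 / 4 < c * (2 * √(q / c)) ^ 2 / 4 := by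
          have : 0 ≤ x + x₀ := by linarith [Real.sqrt_nonneg (p / c)]
          gcongr
      _ = q := mul_two_mul_sqrt_div_sq_div_four hc hq

theorem stmt19_general (C₁ k m x₀ lam : ℝ) (hC : 0 < C₁) (hm : 0 < m)
    (a b : ℝ)
    (ha : a = -x₀ + 2 * Real.sqrt (m / C₁))
    (hb : b = -x₀ + 2 * Real.sqrt ((Real.pi + m) / C₁))
    (t : ℝ → ℝ) (htdef : ∀ x, t x = C₁ * (x + x₀) ^ 2 / 4 - m)
    (v : ℝ → ℝ)
    (hv : ∀ s, DifferentiableAt ℝ v s) (hv' : ∀ s, DifferentiableAt ℝ (deriv v) s)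
    (heq : ∀ s ∈ Set.Ioo 0 Real.pi,
      -deriv (deriv v) s + (k / (s + m) ^ 2) * v s = lam * v s)
    (hv0 : v 0 = 0) (hvπ : v Real.pi = 0)
    (u : ℝ → ℝ)
    (hudef : ∀ x, u x = (C₁ * (x + x₀) / 2) ^ (-2 : ℤ) * v (t x)) :
    (∀ x ∈ Set.Ioo a b,
      -deriv (fun z => (1 / 8) * C₁ ^ 3 * (z + x₀) ^ 3 * deriv u z) x
          + (k / 2) * C₁ ^ 3 * (x + x₀) * u x
        = lam * (C₁ * (x + x₀) / 2) ^ 5 * u x) ∧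
    u a = 0 ∧ u b = 0 := by
  set ρ : ℝ → ℝ := fun z => C₁ * (z + x₀) / 2
  have ht (z : ℝ) : HasDerivAt t (ρ z) z :=
    funext htdef ▸ hasDerivAt_mul_add_sq_div_four_sub C₁ x₀ m z
  have hρ (z : ℝ) : HasDerivAt ρ (C₁ / 2) z := by
    simpa using (((hasDerivAt_id z).add_const x₀).const_mul C₁).div_const 2
  have hta : t a = 0 := by
    rw [htdef, show a + x₀ = 2 * √(m / C₁) by rw [ha]; ring,
      mul_two_mul_sqrt_div_sq_div_four hC hm.le, sub_self]
  have htb : t b = Real.pi := by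
    rw [htdef, show b + x₀ = 2 * √((Real.pi + m) / C₁) by rw [hb]; ring,
      mul_two_mul_sqrt_div_sq_div_four hC (by positivity), add_sub_cancel_right]
  refine ⟨fun x hx => ?_, by rw [hudef, hta, hv0, mul_zero], by rw [hudef, htb, hvπ, mul_zero]⟩
  have htx : t x + m ∈ Ioo m (Real.pi + m) := by
    rw [htdef, sub_add_cancel]
    exact mul_add_sq_div_four_mem_Ioo hC hm.le (by positivity) (ha ▸ hb ▸ hx)
  have hy : 0 < x + x₀ := by linarith [hx.1, Real.sqrt_nonneg (m / C₁)]
  have hρx : ρ x ≠ 0 := by positivity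
  have hflux : (fun z => (1 / 8) * C₁ ^ 3 * (z + x₀) ^ 3 * deriv u z)
      = fun z => ρ z ^ 3 * deriv (fun z => ρ z ^ (-2 : ℤ) * v (t z)) z := by
    rw [show u = _ from funext hudef]
    ext z
    ring
  have hvx := heq (t x) ⟨by linarith [htx.1], by linarith [htx.2]⟩
  rw [hflux, deriv_cube_mul_deriv_zpow_neg_two_mul_comp ht hρ hv hv' hρx, hudef,
    show deriv (deriv v) (t x) = (k / (t x + m) ^ 2 - lam) * v (t x) by linarith,
    show t x + m = C₁ * (x + x₀) ^ 2 / 4 by rw [htdef]; ring]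
  -- both potential terms are `2 k C₁ / (x + x₀) · v (t x)`
  simp only [ρ, zpow_neg, zpow_ofNat]
  field_simp
  ring

/-- reciprocal-linear transformation function
`w(t) = 1/(C₁·m + C₁·t)`: the second PdHA problem transforms exactly to
`−((1/8)C₁³(x+x₀)³·u')' + (k/2)C₁³(x+x₀)·u = λ·(C₁(x+x₀)/2)⁵·u`
with Dirichlet boundary conditions. -/
theorem stmt19 (C₁ k m x₀ lam : ℝ) (hC : 0 < C₁) (hk : 0 < k) (hm : 0 < m)
    (a b : ℝ)
    (ha : a = -x₀ + 2 * Real.sqrt (m / C₁))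
    (hb : b = -x₀ + 2 * Real.sqrt ((Real.pi + m) / C₁))
    (t : ℝ → ℝ) (htdef : ∀ x, t x = C₁ * (x + x₀) ^ 2 / 4 - m)
    (v : ℝ → ℝ)
    (hv : ∀ s, DifferentiableAt ℝ v s) (hv' : ∀ s, DifferentiableAt ℝ (deriv v) s)
    (heq : ∀ s ∈ Set.Ioo 0 Real.pi,
      -deriv (deriv v) s + (k / (s + m) ^ 2) * v s = lam * v s)
    (hv0 : v 0 = 0) (hvπ : v Real.pi = 0)
    (u : ℝ → ℝ)
    (hudef : ∀ x, u x = (C₁ * (x + x₀) / 2) ^ (-2 : ℤ) * v (t x)) :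
    (∀ x ∈ Set.Ioo a b,
      -deriv (fun z => (1 / 8) * C₁ ^ 3 * (z + x₀) ^ 3 * deriv u z) x
          + (k / 2) * C₁ ^ 3 * (x + x₀) * u x
        = lam * (C₁ * (x + x₀) / 2) ^ 5 * u x) ∧
    u a = 0 ∧ u b = 0 :=
  stmt19_general C₁ k m x₀ lam hC hm a b ha hb t htdef v hv hv' heq hv0 hvπ u hudef
end
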